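/- arXiv:2405.07968 — 8 statements merged into one kernel-verified Lean document; each statement's English description precedes it below -/
import Mathlib

section
/- Let E_ε, A_ε ∈ ℝ^{m_ε×n_ε} satisfy rank(λE_ε − A_ε) = m_ε for every λ ∈ ℂ (rank over ℂ) and rank E_ε = m_ε; let J_f ∈ ℝ^{n_f×n_f}; let J_σ ∈ ℝ^{n_σ×n_σ} be nilpotent; let E_η, A_η ∈ ℝ^{m_η×n_η} satisfy rank(λE_η − A_η) = n_η for every λ ∈ ℂ and rank E_η = n_η. Set E = blkdiag(E_ε, I_{n_f}, J_σ, E_η) and A = blkdiag(A_ε, J_f, I_{n_σ}, A_η), both of size m×n with m = m_ε+n_f+n_σ+m_η and n = n_ε+n_f+n_σ+n_η ≥ 1, and let K = [K_ε K_f K_σ K_η] ∈ ℝ^{r×n} be partitioned conformably with the columns of E. Then rank F_{n+1,[E,A]} = rank F_{n+1,[E,A,K]} if and only if K_σ J_σ = 0 and K_ε = 0. -/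
/-!
Since `E` and `A` are block diagonal, a vector of `ker F_{n+1,[E,A]}` is a sequence
`x₀, …, xₙ` with `E xᵢ + A xᵢ₊₁ = 0` and `E xₙ = 0` that splits into four independent
such sequences, and the rank condition says exactly that `K x₁ = 0` on this kernel.
In the blocks where `E` is injective (`I` and `E_η`) the sequence vanishes by backward
induction; in the nilpotent block `x₁ = -J_σ x₀` with `x₀` arbitrary; in the `ε` block
`x₁` is arbitrary, because a pencil of full row rank without finite eigenvalues lets every
vector start a chain that ends in `ker E_ε` within `n_ε` steps: a subspace `U ≠ ⊤` with
`E⁻¹(A U) = U` would produce an eigenvalue on the quotient by `U`.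
Hence the condition reads `K_σ J_σ = 0` and `K_ε = 0`.
-/

open Matrix

/-- The block matrix `F_{k,[E,A]}`: viewed as a `k × k` array of `m × n` blocks,
diagonal blocks equal `E`, superdiagonal blocks equal `A`, all other blocks zero. -/
noncomputable def Fmat (k : ℕ) {R C : Type*} [Fintype R] [Fintype C]
    (E A : Matrix R C ℝ) : Matrix (Fin k × R) (Fin k × C) ℝ :=
  Matrix.of fun p q =>
    if q.1.val = p.1.val then E p.2 q.2
    else if q.1.val = p.1.val + 1 then A p.2 q.2
    else 0

/-- The matrix `F_{k,[E,A,K]}`: `F_{k,[E,A]}` with an extra block row appended at the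
bottom, having `K` in the second block column and zeros elsewhere. -/
noncomputable def FmatK (k : ℕ) {R C : Type*} [Fintype R] [Fintype C] {r : ℕ}
    (E A : Matrix R C ℝ) (K : Matrix (Fin r) C ℝ) :
    Matrix ((Fin k × R) ⊕ Fin r) (Fin k × C) ℝ :=
  Matrix.of fun p q =>
    match p with
    | Sum.inl pr => Fmat k E A pr q
    | Sum.inr i => if q.1.val = 1 then K i q.2 else 0

/-- The generalized Wong sequence `W^i_{[E,A,B,C]}`:
`W⁰ = {0}`, `W^{i+1} = E⁻¹(A·W^i + im B) ∩ ker C`. -/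
noncomputable def WongW {R : Type*} [Fintype R] {n l p : ℕ}
    (E A : Matrix R (Fin n) ℝ) (B : Matrix R (Fin l) ℝ) (C : Matrix (Fin p) (Fin n) ℝ) :
    ℕ → Submodule ℝ (Fin n → ℝ)
  | 0 => ⊥
  | i + 1 =>
      (Submodule.comap E.mulVecLin
        (Submodule.map A.mulVecLin (WongW E A B C i) ⊔ LinearMap.range B.mulVecLin)) ⊓
        LinearMap.ker C.mulVecLin

/-- The generalized Wong sequence `V^i_{[E,A,B,C]}`:
`V⁰ = ker C`, `V^{i+1} = A⁻¹(E·V^i + im B) ∩ ker C`. -/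
noncomputable def WongV {R : Type*} [Fintype R] {n l p : ℕ}
    (E A : Matrix R (Fin n) ℝ) (B : Matrix R (Fin l) ℝ) (C : Matrix (Fin p) (Fin n) ℝ) :
    ℕ → Submodule ℝ (Fin n → ℝ)
  | 0 => LinearMap.ker C.mulVecLin
  | i + 1 =>
      (Submodule.comap A.mulVecLin
        (Submodule.map E.mulVecLin (WongV E A B C i) ⊔ LinearMap.range B.mulVecLin)) ⊓
        LinearMap.ker C.mulVecLin


lemma Matrix.rank_eq_rank_fromRows_iff {K m r n : Type*} [Field K] [Fintype m] [Fintype r]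
    [Fintype n] (M : Matrix m n K) (N : Matrix r n K) :
    M.rank = (fromRows M N).rank ↔ ∀ x, M *ᵥ x = 0 → N *ᵥ x = 0 := by
  have hker : LinearMap.ker (fromRows M N).mulVecLin =
      LinearMap.ker M.mulVecLin ⊓ LinearMap.ker N.mulVecLin := by
    ext x
    simp [fromRows_mulVec, funext_iff]
  have hM := LinearMap.finrank_range_add_finrank_ker M.mulVecLin
  have hMN := LinearMap.finrank_range_add_finrank_ker (fromRows M N).mulVecLin
  rw [hker] at hMN
  simp only [Matrix.rank]
  constructor
  · intro h x hx
    have hinf : LinearMap.ker M.mulVecLin ⊓ LinearMap.ker N.mulVecLin =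
        LinearMap.ker M.mulVecLin :=
      Submodule.eq_of_le_of_finrank_eq inf_le_left (by omega)
    have hx' : x ∈ LinearMap.ker M.mulVecLin ⊓ LinearMap.ker N.mulVecLin := by
      rw [hinf]
      exact hx
    exact hx'.2
  · intro h
    rw [inf_eq_left.mpr fun x hx => h x hx] at hMN
    omega

lemma Matrix.surjective_mulVec_of_rank_eq {K ι : Type*} [Field K] [Fintype ι]
    {m : ℕ} (M : Matrix (Fin m) ι K) (h : M.rank = m) : Function.Surjective M.mulVec := by
  rw [← Matrix.coe_mulVecLin, ← LinearMap.range_eq_top]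
  apply Submodule.eq_top_of_finrank_eq
  simpa [Matrix.rank] using h

lemma Matrix.injective_mulVec_of_rank_eq {K ι : Type*} [Field K] [Fintype ι]
    {n : ℕ} (M : Matrix ι (Fin n) K) (h : M.rank = n) : Function.Injective M.mulVec := by
  rw [← Matrix.coe_mulVecLin, ← LinearMap.ker_eq_bot, ← Submodule.finrank_eq_zero]
  have := LinearMap.finrank_range_add_finrank_ker M.mulVecLin
  simp only [Matrix.rank] at h
  simp only [Module.finrank_fin_fun] at this
  omega

lemma Matrix.pow_card_eq_zero_of_isNilpotent {R ι : Type*} [CommRing R] [IsDomain R] [Fintype ι]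
    [DecidableEq ι] {J : Matrix ι ι R} (hJ : IsNilpotent J) : J ^ Fintype.card ι = 0 := by
  have hchar : J.charpoly = Polynomial.X ^ Fintype.card ι :=
    sub_eq_zero.mp (isNilpotent_charpoly_sub_pow_of_isNilpotent hJ).eq_zero
  simpa [hchar] using J.aeval_self_charpoly

section BlockSequence

variable {k : ℕ} {R C : Type*} [Fintype R] [Fintype C]

/-- The blocks of `x`, padded with `0` from index `k` on: with this padding the last block
row `E x_{k-1} = 0` of `F_{k,[E,A]} x = 0` is the case `i = k - 1` of `E xᵢ + A xᵢ₊₁ = 0`. -/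
def blockSeq (x : Fin k × C → ℝ) (i : ℕ) : C → ℝ :=
  fun c => if h : i < k then x (⟨i, h⟩, c) else 0

lemma Fmat_mulVec_apply (E A : Matrix R C ℝ) (x : Fin k × C → ℝ) (i : Fin k) (r : R) :
    (Fmat k E A *ᵥ x) (i, r) = (E *ᵥ blockSeq x i + A *ᵥ blockSeq x (i + 1)) r := by
  have hsplit : ∀ (j : Fin k) (c : C), Fmat k E A (i, r) (j, c) =
      (if j = i then E r c else 0) + (if (j : ℕ) = i + 1 then A r c else 0) := by
    intro j c
    simp only [Fmat, of_apply, Fin.ext_iff]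
    split_ifs <;> first | omega | simp
  simp only [mulVec, dotProduct, Fintype.sum_prod_type, hsplit, add_mul, Finset.sum_add_distrib,
    Pi.add_apply, blockSeq]
  congr 1
  · simp [ite_mul, Finset.sum_ite_eq']
  · by_cases h : (i : ℕ) + 1 < k
    · rw [Finset.sum_eq_single ⟨i + 1, h⟩
        (fun j _ hj => by simp [Fin.ext_iff] at hj; simp [hj]) (by simp)]
      simp [h]
    · simp only [h, dite_false, mul_zero, Finset.sum_const_zero]
      exact Finset.sum_eq_zero fun j _ => by simp [ite_mul]; omega

lemma Fmat_mulVec_eq_zero_iff (E A : Matrix R C ℝ) (x : Fin k × C → ℝ) :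
    Fmat k E A *ᵥ x = 0 ↔ ∀ i < k, E *ᵥ blockSeq x i + A *ᵥ blockSeq x (i + 1) = 0 := by
  simp only [funext_iff, Prod.forall, Fmat_mulVec_apply, Pi.zero_apply]
  exact ⟨fun h i hi => h ⟨i, hi⟩, fun h i => h i i.isLt⟩

/-- The extra block row of `F_{k,[E,A,K]}` tests exactly these second blocks. -/
def kerSecondBlock (k : ℕ) (E A : Matrix R C ℝ) : Set (C → ℝ) :=
  {y | ∃ x : Fin k × C → ℝ, Fmat k E A *ᵥ x = 0 ∧ blockSeq x 1 = y}

lemma rank_Fmat_eq_rank_FmatK_iff {r : ℕ} (E A : Matrix R C ℝ) (K : Matrix (Fin r) C ℝ) :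
    (Fmat k E A).rank = (FmatK k E A K).rank ↔ ∀ y ∈ kerSecondBlock k E A, K *ᵥ y = 0 := by
  let K₁ : Matrix (Fin r) (Fin k × C) ℝ := of fun i q => if (q.1 : ℕ) = 1 then K i q.2 else 0
  have hFmatK : FmatK k E A K = fromRows (Fmat k E A) K₁ := by
    ext (p | p) q <;> rfl
  have hK₁ (x : Fin k × C → ℝ) : K₁ *ᵥ x = K *ᵥ blockSeq x 1 := by
    ext i
    simp only [K₁, mulVec, dotProduct, Fintype.sum_prod_type, of_apply, blockSeq, ite_mul,
      zero_mul]
    by_cases h : 1 < k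
    · rw [Finset.sum_eq_single ⟨1, h⟩ (fun j _ hj => by simp [Fin.ext_iff] at hj; simp [hj])
        (by simp)]
      simp [h]
    · simp only [h, dite_false, mul_zero, Finset.sum_const_zero]
      exact Finset.sum_eq_zero fun j _ => by simp; omega
  simp only [hFmatK, rank_eq_rank_fromRows_iff, hK₁, kerSecondBlock, Set.mem_ofPred_eq,
    forall_exists_index, and_imp]
  exact ⟨fun h y x hx hxy => hxy ▸ h x hx, fun h x hx => h _ x hx rfl⟩

end BlockSequence

section KerSecondBlock

variable {k : ℕ} {R C : Type*} [Fintype R] [Fintype C]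

lemma Fmat_fromBlocks_mulVec_eq_zero_iff {R' C' : Type*} [Fintype R'] [Fintype C']
    (E A : Matrix R C ℝ) (E' A' : Matrix R' C' ℝ) (x : Fin k × (C ⊕ C') → ℝ) :
    Fmat k (fromBlocks E 0 0 E') (fromBlocks A 0 0 A') *ᵥ x = 0 ↔
      Fmat k E A *ᵥ (fun p => x (p.1, .inl p.2)) = 0 ∧
        Fmat k E' A' *ᵥ (fun p => x (p.1, .inr p.2)) = 0 := by
  have hl (i : ℕ) : blockSeq (fun p => x (p.1, .inl p.2)) i = blockSeq x i ∘ Sum.inl := rfl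
  have hr (i : ℕ) : blockSeq (fun p => x (p.1, .inr p.2)) i = blockSeq x i ∘ Sum.inr := rfl
  simp only [Fmat_mulVec_eq_zero_iff, fromBlocks_mulVec, zero_mulVec, add_zero, zero_add,
    ← Sum.elim_add_add, ← Sum.elim_zero_zero, Sum.elim_eq_iff, hl, hr, ← forall_and]

lemma mem_kerSecondBlock_fromBlocks {R' C' : Type*} [Fintype R'] [Fintype C']
    (E A : Matrix R C ℝ) (E' A' : Matrix R' C' ℝ) (y : C ⊕ C' → ℝ) :
    y ∈ kerSecondBlock k (fromBlocks E 0 0 E') (fromBlocks A 0 0 A') ↔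
      y ∘ Sum.inl ∈ kerSecondBlock k E A ∧ y ∘ Sum.inr ∈ kerSecondBlock k E' A' := by
  constructor
  · rintro ⟨x, hx, rfl⟩
    rw [Fmat_fromBlocks_mulVec_eq_zero_iff] at hx
    exact ⟨⟨_, hx.1, rfl⟩, ⟨_, hx.2, rfl⟩⟩
  · rintro ⟨⟨x, hx, hxy⟩, ⟨x', hx', hxy'⟩⟩
    refine ⟨fun p => Sum.elim (fun c => x (p.1, c)) (fun c => x' (p.1, c)) p.2,
      (Fmat_fromBlocks_mulVec_eq_zero_iff ..).mpr ⟨hx, hx'⟩, ?_⟩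
    ext (c | c)
    · exact congrFun hxy c
    · exact congrFun hxy' c

lemma blockSeq_eq_zero_of_injective {E A : Matrix R C ℝ} (hE : Function.Injective E.mulVec)
    {x : Fin k × C → ℝ} (hx : Fmat k E A *ᵥ x = 0) (i : ℕ) : blockSeq x i = 0 := by
  suffices ∀ d i, k ≤ i + d → blockSeq x i = 0 from this k i (by omega)
  intro d
  induction d with
  | zero =>
    intro i hi
    ext c
    simp [blockSeq, not_lt.mpr (by omega : k ≤ i)]
  | succ d ih =>
    intro i hi
    by_cases hik : i < k
    · apply hE
      have hrow := (Fmat_mulVec_eq_zero_iff E A x).mp hx i hik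
      rwa [ih (i + 1) (by omega), mulVec_zero, add_zero, ← mulVec_zero E] at hrow
    · ext c
      simp [blockSeq, hik]

lemma kerSecondBlock_eq_zero_of_injective {E A : Matrix R C ℝ}
    (hE : Function.Injective E.mulVec) : kerSecondBlock k E A = {0} := by
  refine Set.eq_singleton_iff_unique_mem.mpr ⟨⟨0, mulVec_zero _, ?_⟩, ?_⟩
  · ext c
    simp [blockSeq]
  · rintro y ⟨x, hx, rfl⟩
    exact blockSeq_eq_zero_of_injective hE hx 1

lemma mem_kerSecondBlock_of_recurrence (hk : 1 < k) {E A : Matrix R C ℝ} (w : ℕ → C → ℝ)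
    (hw : ∀ i < k, E *ᵥ w i + A *ᵥ w (i + 1) = 0) (hwk : w k = 0) :
    w 1 ∈ kerSecondBlock k E A := by
  have hseq : ∀ i ≤ k, blockSeq (fun p : Fin k × C => w p.1 p.2) i = w i := by
    intro i hi
    ext c
    by_cases h : i < k
    · simp [blockSeq, h]
    · simp [blockSeq, show i = k by omega, hwk]
  refine ⟨_, (Fmat_mulVec_eq_zero_iff E A _).mpr fun i hi => ?_, hseq 1 hk.le⟩
  rw [hseq i hi.le, hseq (i + 1) hi]
  exact hw i hi

lemma kerSecondBlock_eq_range_of_pow_eq_zero [DecidableEq C] (hk : 1 < k) {J : Matrix C C ℝ}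
    (hJ : J ^ k = 0) :
    kerSecondBlock k J 1 = Set.range J.mulVec := by
  ext y
  constructor
  · rintro ⟨x, hx, rfl⟩
    have hrow := (Fmat_mulVec_eq_zero_iff J 1 x).mp hx 0 (by omega)
    rw [one_mulVec, add_eq_zero_iff_neg_eq] at hrow
    exact ⟨-blockSeq x 0, by rw [mulVec_neg, hrow]⟩
  · rintro ⟨u, rfl⟩
    have hw := mem_kerSecondBlock_of_recurrence hk (E := J) (A := 1)
      (fun i => (-J) ^ i *ᵥ -u) (fun i _ => by
        rw [one_mulVec, pow_succ', ← mulVec_mulVec, neg_mulVec, add_neg_cancel])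
      (by rw [neg_pow, hJ, mul_zero, zero_mulVec])
    rwa [pow_one, neg_mulVec, mulVec_neg, neg_neg] at hw

end KerSecondBlock

section ChainSpace

variable {K V W : Type*} [Field K] [AddCommGroup V] [Module K V] [AddCommGroup W] [Module K W]
  (f g : V →ₗ[K] W)

def chainSpace : ℕ → Submodule K V
  | 0 => ⊥
  | j + 1 => ((chainSpace j).map g).comap f

lemma chainSpace_mono : Monotone (chainSpace f g) := by
  refine monotone_nat_of_le_succ fun j => ?_
  induction j with
  | zero => exact bot_le
  | succ j ih => exact Submodule.comap_mono (Submodule.map_mono ih)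

lemma exists_chain_of_mem_chainSpace {j : ℕ} {v : V} (hv : v ∈ chainSpace f g j) :
    ∃ w : ℕ → V, w 0 = v ∧ w j = 0 ∧ ∀ t < j, f (w t) + g (w (t + 1)) = 0 := by
  induction j generalizing v with
  | zero =>
    exact ⟨fun _ => v, rfl, (Submodule.mem_bot K).mp hv, fun t ht => absurd ht t.not_lt_zero⟩
  | succ j ih =>
    obtain ⟨y, hy, hgy⟩ := Submodule.mem_map.mp (Submodule.mem_comap.mp hv)
    obtain ⟨w, hw0, hwj, hw⟩ := ih (Submodule.neg_mem _ hy)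
    refine ⟨fun | 0 => v | t + 1 => w t, rfl, hwj, fun t ht => ?_⟩
    cases t with
    | zero => simp [hw0, hgy]
    | succ t => exact hw t (by omega)

lemma exists_chainSpace_eq_succ [FiniteDimensional K V] :
    ∃ j ≤ Module.finrank K V, chainSpace f g j = chainSpace f g (j + 1) := by
  by_contra! hne
  have hgrow : ∀ j ≤ Module.finrank K V + 1, j ≤ Module.finrank K (chainSpace f g j) := by
    intro j
    induction j with
    | zero => simp
    | succ j ih =>
      intro hj
      have hlt := Submodule.finrank_lt_finrank_of_lt <|
        (chainSpace_mono f g (j.le_add_right 1)).lt_of_ne (hne j (by omega))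
      have := ih (by omega)
      omega
  have := hgrow _ le_rfl
  have := Submodule.finrank_le (chainSpace f g (Module.finrank K V + 1))
  omega

lemma eq_top_of_comap_map_eq [IsAlgClosed K] [FiniteDimensional K V]
    (hf : Function.Surjective f) (hfg : ∀ μ : K, Function.Surjective (μ • f - g))
    {U : Submodule K V} (hU : (U.map g).comap f = U) : U = ⊤ := by
  by_contra hUtop
  -- `f` induces an isomorphism `V ⧸ U ≃ W ⧸ g U`; an eigenvalue `μ` of `f̄⁻¹ ḡ` makes
  -- `μ f̄ - ḡ` non-injective, although it is a surjection between spaces of equal dimension.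
  have : Nontrivial (V ⧸ U) := Submodule.Quotient.nontrivial_iff.mpr hUtop
  let fq := U.mapQ (U.map g) f hU.ge
  let gq := U.mapQ (U.map g) g (Submodule.le_comap_map g U)
  have hfq : Function.Bijective fq := by
    refine ⟨(injective_iff_map_eq_zero fq).mpr fun v hv => ?_, fun w => ?_⟩
    · obtain ⟨v, rfl⟩ := Submodule.Quotient.mk_surjective U v
      rw [Submodule.mapQ_apply, Submodule.Quotient.mk_eq_zero] at hv
      rw [Submodule.Quotient.mk_eq_zero, ← hU]
      exact hv
    · obtain ⟨w, rfl⟩ := Submodule.Quotient.mk_surjective _ w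
      obtain ⟨v, rfl⟩ := hf w
      exact ⟨Submodule.Quotient.mk v, rfl⟩
  let e := LinearEquiv.ofBijective fq hfq
  obtain ⟨μ, hμ⟩ := Module.End.exists_eigenvalue (e.symm.toLinearMap ∘ₗ gq)
  obtain ⟨v, hv⟩ := hμ.exists_hasEigenvector
  have hsurj : Function.Surjective (e.symm.toLinearMap ∘ₗ (μ • fq - gq)) := by
    refine e.symm.surjective.comp fun w => ?_
    obtain ⟨w, rfl⟩ := Submodule.Quotient.mk_surjective _ w
    obtain ⟨u, rfl⟩ := hfg μ w
    exact ⟨Submodule.Quotient.mk u, rfl⟩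
  have hzero : (e.symm.toLinearMap ∘ₗ (μ • fq - gq)) v = 0 := by
    have he : e.symm (fq v) = v := e.symm_apply_apply v
    have hg : e.symm (gq v) = μ • v := hv.apply_eq_smul
    simp [he, hg]
  exact hv.2 (LinearMap.injective_iff_surjective.mpr hsurj (hzero.trans (map_zero _).symm))

lemma chainSpace_eq_top [IsAlgClosed K] [FiniteDimensional K V] (hf : Function.Surjective f)
    (hfg : ∀ μ : K, Function.Surjective (μ • f - g)) {j : ℕ} (hj : Module.finrank K V ≤ j) :
    chainSpace f g j = ⊤ := by
  obtain ⟨j₀, hj₀, hstable⟩ := exists_chainSpace_eq_succ f g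
  have htop := eq_top_of_comap_map_eq f g hf hfg hstable.symm
  exact top_le_iff.mp (htop ▸ chainSpace_mono f g (hj₀.trans hj))

end ChainSpace

section RealPencil

variable {m n : ℕ}

lemma re_mulVec_map_ofReal {ι κ : Type*} [Fintype κ] (E : Matrix ι κ ℝ) (z : κ → ℂ)
    (i : ι) :
    ((E.map Complex.ofReal *ᵥ z) i).re = (E *ᵥ fun c => (z c).re) i := by
  simp [mulVec, dotProduct, Complex.re_sum]

lemma im_mulVec_map_ofReal {ι κ : Type*} [Fintype κ] (E : Matrix ι κ ℝ) (z : κ → ℂ)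
    (i : ι) :
    ((E.map Complex.ofReal *ᵥ z) i).im = (E *ᵥ fun c => (z c).im) i := by
  simp [mulVec, dotProduct, Complex.im_sum]

lemma surjective_mulVec_map_ofReal {ι κ : Type*} [Fintype κ] {E : Matrix ι κ ℝ}
    (hE : Function.Surjective E.mulVec) : Function.Surjective (E.map Complex.ofReal).mulVec := by
  intro z
  obtain ⟨x, hx⟩ := hE fun i => (z i).re
  obtain ⟨y, hy⟩ := hE fun i => (z i).im
  refine ⟨fun c => ⟨x c, y c⟩, funext fun i => Complex.ext ?_ ?_⟩
  · simpa [re_mulVec_map_ofReal] using congrFun hx i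
  · simpa [im_mulVec_map_ofReal] using congrFun hy i

lemma exists_chain_of_pencil {E A : Matrix (Fin m) (Fin n) ℝ}
    (hpencil : ∀ lam : ℂ, (lam • E.map Complex.ofReal - A.map Complex.ofReal).rank = m)
    (hE : E.rank = m) {j : ℕ} (hj : n ≤ j) (v : Fin n → ℝ) :
    ∃ w : ℕ → Fin n → ℝ, w 0 = v ∧ w j = 0 ∧ ∀ t < j, E *ᵥ w t + A *ᵥ w (t + 1) = 0 := by
  let f := (E.map Complex.ofReal).mulVecLin
  let g := (A.map Complex.ofReal).mulVecLin
  have hf : Function.Surjective f :=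
    surjective_mulVec_map_ofReal (E.surjective_mulVec_of_rank_eq hE)
  have hfg (μ : ℂ) : Function.Surjective (μ • f - g) := by
    convert (_ : Matrix _ _ ℂ).surjective_mulVec_of_rank_eq (hpencil μ) using 1
    ext z i
    simp [f, g, sub_mulVec, smul_mulVec]
  have hv : (fun c => (v c : ℂ)) ∈ chainSpace f g j := by
    rw [chainSpace_eq_top f g hf hfg (by simpa using hj)]
    trivial
  obtain ⟨w, hw0, hwj, hw⟩ := exists_chain_of_mem_chainSpace f g hv
  refine ⟨fun t c => (w t c).re, by simp [hw0], funext fun c => by simp [hwj],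
    fun t ht => funext fun i => ?_⟩
  simpa [f, g, re_mulVec_map_ofReal] using congrArg (fun z => (z i).re) (hw t ht)

lemma kerSecondBlock_eq_univ_of_pencil {k : ℕ} {E A : Matrix (Fin m) (Fin n) ℝ}
    (hpencil : ∀ lam : ℂ, (lam • E.map Complex.ofReal - A.map Complex.ofReal).rank = m)
    (hE : E.rank = m) (hk : 1 < k) (hnk : n < k) : kerSecondBlock k E A = Set.univ := by
  refine Set.eq_univ_of_forall fun v => ?_
  obtain ⟨k, rfl⟩ : ∃ k', k = k' + 1 := ⟨k - 1, by omega⟩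
  obtain ⟨w₀, hw₀⟩ := E.surjective_mulVec_of_rank_eq hE (-(A *ᵥ v))
  obtain ⟨w, hw0, hwk, hw⟩ := exists_chain_of_pencil hpencil hE (j := k) (by omega) v
  refine hw0 ▸ mem_kerSecondBlock_of_recurrence hk (fun | 0 => w₀ | t + 1 => w t)
    (fun i hi => ?_) hwk
  cases i with
  | zero => simp [hw₀, hw0]
  | succ i => exact hw i (by omega)

end RealPencil

theorem stmt_2_general {mε nε nf nσ mη nη r : ℕ}
    (Eε Aε : Matrix (Fin mε) (Fin nε) ℝ)
    (Jf : Matrix (Fin nf) (Fin nf) ℝ)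
    (Jσ : Matrix (Fin nσ) (Fin nσ) ℝ)
    (Eη Aη : Matrix (Fin mη) (Fin nη) ℝ)
    (Kε : Matrix (Fin r) (Fin nε) ℝ) (Kf : Matrix (Fin r) (Fin nf) ℝ)
    (Kσ : Matrix (Fin r) (Fin nσ) ℝ) (Kη : Matrix (Fin r) (Fin nη) ℝ)
    (hεpencil : ∀ lam : ℂ,
      (lam • Eε.map Complex.ofReal - Aε.map Complex.ofReal).rank = mε)
    (hEε : Eε.rank = mε)
    (hJσ : IsNilpotent Jσ)
    (hEη : Eη.rank = nη)
    (n : ℕ) (hn : n = nε + nf + nσ + nη) (hn1 : 1 ≤ n) :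
    (Fmat (n + 1)
        (Matrix.fromBlocks Eε 0 0
          (Matrix.fromBlocks (1 : Matrix (Fin nf) (Fin nf) ℝ) 0 0
            (Matrix.fromBlocks Jσ 0 0 Eη)))
        (Matrix.fromBlocks Aε 0 0
          (Matrix.fromBlocks Jf 0 0
            (Matrix.fromBlocks (1 : Matrix (Fin nσ) (Fin nσ) ℝ) 0 0 Aη)))).rank =
      (FmatK (n + 1)
        (Matrix.fromBlocks Eε 0 0
          (Matrix.fromBlocks (1 : Matrix (Fin nf) (Fin nf) ℝ) 0 0
            (Matrix.fromBlocks Jσ 0 0 Eη)))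
        (Matrix.fromBlocks Aε 0 0
          (Matrix.fromBlocks Jf 0 0
            (Matrix.fromBlocks (1 : Matrix (Fin nσ) (Fin nσ) ℝ) 0 0 Aη)))
        (Matrix.fromCols Kε (Matrix.fromCols Kf (Matrix.fromCols Kσ Kη)))).rank ↔
    Kσ * Jσ = 0 ∧ Kε = 0 := by
  have hk : 1 < n + 1 := by omega
  have hJσk : Jσ ^ (n + 1) = 0 :=
    pow_eq_zero_of_le (by simp; omega) (Matrix.pow_card_eq_zero_of_isNilpotent hJσ)
  rw [rank_Fmat_eq_rank_FmatK_iff]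
  simp only [mem_kerSecondBlock_fromBlocks,
    kerSecondBlock_eq_univ_of_pencil hεpencil hEε hk (by omega : nε < n + 1),
    kerSecondBlock_eq_zero_of_injective (A := Jf) (mulVec_injective_iff_isUnit.mpr isUnit_one),
    kerSecondBlock_eq_range_of_pow_eq_zero hk hJσk,
    kerSecondBlock_eq_zero_of_injective (A := Aη) (Eη.injective_mulVec_of_rank_eq hEη),
    Set.mem_univ, Set.mem_singleton_iff, true_and]
  constructor
  · intro h
    have key (v : Fin nε → ℝ) (u : Fin nσ → ℝ) : Kε *ᵥ v + Kσ *ᵥ (Jσ *ᵥ u) = 0 := by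
      simpa using h (Sum.elim v (Sum.elim 0 (Sum.elim (Jσ *ᵥ u) 0))) ⟨rfl, ⟨u, rfl⟩, rfl⟩
    constructor
    · exact mulVec_injective (funext fun u => by simpa [mulVec_mulVec] using key 0 u)
    · exact mulVec_injective (funext fun v => by simpa using key v 0)
  · rintro ⟨hσ, hε⟩ y ⟨hyf, ⟨u, hu⟩, hyη⟩
    simp [fromCols_mulVec, hyf, hyη, ← hu, mulVec_mulVec, hσ, hε]

/-- Lemma 3.8: for `E = blkdiag(E_ε, I, J_σ, E_η)`, `A = blkdiag(A_ε, J_f, I, A_η)` in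
quasi-Kronecker form and `K = [K_ε K_f K_σ K_η]`, the rank condition
`rank F_{n+1,[E,A]} = rank F_{n+1,[E,A,K]}` holds iff `K_σ J_σ = 0` and `K_ε = 0`. -/
theorem stmt_2 {mε nε nf nσ mη nη r : ℕ}
    (Eε Aε : Matrix (Fin mε) (Fin nε) ℝ)
    (Jf : Matrix (Fin nf) (Fin nf) ℝ)
    (Jσ : Matrix (Fin nσ) (Fin nσ) ℝ)
    (Eη Aη : Matrix (Fin mη) (Fin nη) ℝ)
    (Kε : Matrix (Fin r) (Fin nε) ℝ) (Kf : Matrix (Fin r) (Fin nf) ℝ)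
    (Kσ : Matrix (Fin r) (Fin nσ) ℝ) (Kη : Matrix (Fin r) (Fin nη) ℝ)
    (hεpencil : ∀ lam : ℂ,
      (lam • Eε.map Complex.ofReal - Aε.map Complex.ofReal).rank = mε)
    (hEε : Eε.rank = mε)
    (hJσ : IsNilpotent Jσ)
    (hηpencil : ∀ lam : ℂ,
      (lam • Eη.map Complex.ofReal - Aη.map Complex.ofReal).rank = nη)
    (hEη : Eη.rank = nη)
    (n : ℕ) (hn : n = nε + nf + nσ + nη) (hn1 : 1 ≤ n) :
    (Fmat (n + 1)
        (Matrix.fromBlocks Eε 0 0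
          (Matrix.fromBlocks (1 : Matrix (Fin nf) (Fin nf) ℝ) 0 0
            (Matrix.fromBlocks Jσ 0 0 Eη)))
        (Matrix.fromBlocks Aε 0 0
          (Matrix.fromBlocks Jf 0 0
            (Matrix.fromBlocks (1 : Matrix (Fin nσ) (Fin nσ) ℝ) 0 0 Aη)))).rank =
      (FmatK (n + 1)
        (Matrix.fromBlocks Eε 0 0
          (Matrix.fromBlocks (1 : Matrix (Fin nf) (Fin nf) ℝ) 0 0
            (Matrix.fromBlocks Jσ 0 0 Eη)))
        (Matrix.fromBlocks Aε 0 0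
          (Matrix.fromBlocks Jf 0 0
            (Matrix.fromBlocks (1 : Matrix (Fin nσ) (Fin nσ) ℝ) 0 0 Aη)))
        (Matrix.fromCols Kε (Matrix.fromCols Kf (Matrix.fromCols Kσ Kη)))).rank ↔
    Kσ * Jσ = 0 ∧ Kε = 0 :=
  stmt_2_general Eε Aε Jf Jσ Eη Aη Kε Kf Kσ Kη hεpencil hEε hJσ hEη n hn hn1
end

section
/- Let J ∈ ℝ^{k×k} and n ∈ ℕ be such that J^{n+1} = 0. Then rank F_{n+1,[J,I_k]} = n·k, where I_k is the k×k identity matrix. -/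
open Matrix

lemma Fmat_row {n k : ℕ} (J : Matrix (Fin k) (Fin k) ℝ) (w : Fin (n+1) × Fin k → ℝ)
    (i : Fin (n+1)) (j : Fin k) :
    (Matrix.of (fun p q : Fin (n+1) × Fin k =>
      if q.1.val = p.1.val then J p.2 q.2
      else if q.1.val = p.1.val + 1 then (1 : Matrix (Fin k) (Fin k) ℝ) p.2 q.2
      else 0)).mulVec w (i, j) =
      J.mulVec (fun j' => w (i, j')) j +
        (if h : (i : ℕ) + 1 < n + 1 then w (⟨(i:ℕ)+1, h⟩, j) else 0) := by
  simp only [Matrix.mulVec, dotProduct, Matrix.of_apply]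
  rw [Fintype.sum_prod_type]
  by_cases h : (i : ℕ) + 1 < n + 1
  · rw [dif_pos h]
    rw [Fintype.sum_eq_add (a := i) (b := ⟨(i:ℕ)+1, h⟩)]
    · congr 1
      · simp [Matrix.mulVec, dotProduct]
      · simp [Matrix.one_apply]
    · intro hc
      exact absurd (congrArg Fin.val hc) (by simp)
    · intro c hci
      apply Finset.sum_eq_zero
      intro j' _
      rw [if_neg, if_neg, zero_mul]
      · exact fun hh => hci.2 (Fin.ext hh)
      · exact fun hh => hci.1 (Fin.ext hh)
  · rw [dif_neg h, add_zero]
    rw [Fintype.sum_eq_single i]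
    · simp [Matrix.mulVec, dotProduct]
    · intro c hc
      apply Finset.sum_eq_zero
      intro j' _
      rw [if_neg, if_neg, zero_mul]
      · intro hh; have := c.isLt; simp only at hh; omega
      · exact fun hh => hc (Fin.ext hh)

noncomputable def Lmap (n : ℕ) {k : ℕ} (J : Matrix (Fin k) (Fin k) ℝ) :
    (Fin k → ℝ) →ₗ[ℝ] (Fin (n+1) × Fin k → ℝ) where
  toFun v := fun p => ((-J) ^ (p.1 : ℕ)).mulVec v p.2
  map_add' v w := by ext p; simp [Matrix.mulVec_add]
  map_smul' c v := by ext p; simp [Matrix.mulVec_smul]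

theorem stmt_3' {k : ℕ} (J : Matrix (Fin k) (Fin k) ℝ) (n : ℕ)
    (hJ : J ^ (n + 1) = 0) :
    (Matrix.of (fun p q : Fin (n+1) × Fin k =>
      if q.1.val = p.1.val then J p.2 q.2
      else if q.1.val = p.1.val + 1 then (1 : Matrix (Fin k) (Fin k) ℝ) p.2 q.2
      else 0)).rank = n * k := by
  classical
  set F := (Matrix.of (fun p q : Fin (n+1) × Fin k =>
      if q.1.val = p.1.val then J p.2 q.2
      else if q.1.val = p.1.val + 1 then (1 : Matrix (Fin k) (Fin k) ℝ) p.2 q.2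
      else 0)) with hF
  have hinj : Function.Injective (Lmap n J) := by
    intro a b hab
    ext j
    have := congrFun hab ((0 : Fin (n+1)), j)
    simpa [Lmap] using this
  have hker : LinearMap.ker F.mulVecLin = LinearMap.range (Lmap n J) := by
    ext w
    simp only [LinearMap.mem_ker, LinearMap.mem_range]
    constructor
    · intro hw
      have hrow : ∀ (i : Fin (n+1)) (j : Fin k),
          J.mulVec (fun j' => w (i, j')) j +
            (if h : (i : ℕ) + 1 < n + 1 then w (⟨(i:ℕ)+1, h⟩, j) else 0) = 0 := by
        intro i j
        rw [← Fmat_row J w i j]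
        have := congrFun hw (i, j)
        simpa [Matrix.mulVecLin_apply] using this
      refine ⟨fun j => w (0, j), ?_⟩
      have key : ∀ (i : Fin (n+1)) (j : Fin k),
          ((-J) ^ (i : ℕ)).mulVec (fun j => w (0, j)) j = w (i, j) := by
        intro i
        induction i using Fin.induction with
        | zero => intro j; simp
        | succ i ih =>
          intro j
          have h1 : ((i.castSucc : ℕ) + 1 : ℕ) < n + 1 := by
            simp
          have h2 := hrow i.castSucc j
          rw [dif_pos h1] at h2
          have h3 : (⟨(i.castSucc : ℕ) + 1, h1⟩ : Fin (n+1)) = i.succ := by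
            apply Fin.ext; simp
          rw [h3] at h2
          have h4 : (fun j' => w (i.castSucc, j')) =
              ((-J) ^ (i : ℕ)).mulVec (fun j => w (0, j)) := by
            funext j'
            rw [← ih j']
            simp
          have h5 : w (i.succ, j) = -(J.mulVec ((((-J) ^ (i : ℕ))).mulVec
              (fun j => w (0, j))) j) := by
            rw [← h4]; linarith [h2]
          rw [h5]
          have h6 : ((-J) ^ ((i : ℕ) + 1)) = -(J * (-J) ^ (i : ℕ)) := by
            rw [pow_succ' (-J) (i : ℕ), neg_mul]
          have : ((i.succ : Fin (n+1)) : ℕ) = (i : ℕ) + 1 := by simp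
          rw [this, h6, Matrix.neg_mulVec, ← Matrix.mulVec_mulVec]
          simp
      ext p
      obtain ⟨i, j⟩ := p
      simp only [Lmap, LinearMap.coe_mk, AddHom.coe_mk]
      exact key i j
    · rintro ⟨v, rfl⟩
      ext p
      obtain ⟨i, j⟩ := p
      rw [Matrix.mulVecLin_apply]
      have hr := Fmat_row J (Lmap n J v) i j
      rw [hF, hr]
      simp only [Lmap, LinearMap.coe_mk, AddHom.coe_mk, Pi.zero_apply]
      by_cases h : (i : ℕ) + 1 < n + 1
      · rw [dif_pos h]
        rw [Matrix.mulVec_mulVec]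
        have h6 : ((-J) ^ ((i : ℕ) + 1)) = -(J * (-J) ^ (i : ℕ)) := by
          rw [pow_succ' (-J) (i : ℕ), neg_mul]
        rw [h6, Matrix.neg_mulVec]
        simp
      · rw [dif_neg h, add_zero]
        have hi : (i : ℕ) = n := by have := i.isLt; omega
        rw [Matrix.mulVec_mulVec, hi]
        have : J * (-J) ^ n = 0 := by
          have hneg : (-J) = (-1 : ℝ) • J := by simp
          rw [hneg, smul_pow, mul_smul_comm, ← pow_succ' J n, hJ, smul_zero]
        rw [this]
        simp
  have h1 := LinearMap.finrank_range_add_finrank_ker F.mulVecLin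
  have h2 : Module.finrank ℝ (LinearMap.ker F.mulVecLin) = k := by
    rw [hker, LinearMap.finrank_range_of_inj hinj]
    simp [Module.finrank_pi]
  have h3 : Module.finrank ℝ (Fin (n+1) × Fin k → ℝ) = (n+1) * k := by
    simp [Module.finrank_pi]
  have h4 : F.rank = Module.finrank ℝ (LinearMap.range F.mulVecLin) := rfl
  rw [h4]
  rw [h2, h3] at h1
  have : (n+1) * k = n * k + k := by ring
  omega

/-- If `J^{n+1} = 0` then `rank F_{n+1,[J,I]} = n·k`. -/
theorem stmt_3 {k : ℕ} (J : Matrix (Fin k) (Fin k) ℝ) (n : ℕ)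
    (hJ : J ^ (n + 1) = 0) :
    (Fmat (n + 1) J (1 : Matrix (Fin k) (Fin k) ℝ)).rank = n * k := by
  unfold Fmat
  exact stmt_3' J n hJ
end

section
/- Let E, A ∈ ℝ^{m×n} with n ≥ 1 and suppose that W^n_{[E,A,0,0]} = ℝ^n. Then for any K ∈ ℝ^{r×n}: ker F_{n,[E,A]} ⊆ ker [K 0 … 0] (where [K 0 … 0] is the r×nn matrix with K in the first block column and zeros in the remaining n−1 block columns) if and only if K = 0. -/
open Matrix

lemma chain {m n : ℕ} (E A : Matrix (Fin m) (Fin n) ℝ) :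
    ∀ (k : ℕ) (x : Fin n → ℝ),
      x ∈ WongW E A (0 : Matrix (Fin m) (Fin 1) ℝ) (0 : Matrix (Fin 1) (Fin n) ℝ) k →
      ∃ w : ℕ → Fin n → ℝ, w 0 = x ∧ (∀ i, k ≤ i → w i = 0) ∧
        ∀ i, E.mulVec (w i) + A.mulVec (w (i + 1)) = 0 := by
  intro k
  induction k with
  | zero =>
    intro x hx
    simp only [WongW, Submodule.mem_bot] at hx
    subst hx
    exact ⟨fun _ => 0, rfl, fun _ _ => rfl, fun _ => by simp⟩
  | succ k ih =>
    intro x hx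
    simp only [WongW, Submodule.mem_inf, Submodule.mem_comap, Matrix.mulVecLin_zero,
      LinearMap.range_zero, LinearMap.mem_ker, LinearMap.zero_apply, sup_bot_eq,
      Submodule.mem_map] at hx
    obtain ⟨⟨y, hy, hAy⟩, -⟩ := hx
    obtain ⟨w, hw0, hwz, hwc⟩ := ih (-y) (neg_mem hy)
    refine ⟨fun i => Nat.rec x (fun j _ => w j) i, rfl, ?_, ?_⟩
    · intro i hi
      match i, hi with
      | j + 1, hi => exact hwz j (Nat.le_of_succ_le_succ hi)
    · intro i
      match i with
      | 0 =>
        show E.mulVec x + A.mulVec (w 0) = 0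
        rw [hw0]
        simp only [Matrix.mulVecLin_apply] at hAy
        simp [Matrix.mulVec_neg, hAy]
      | j + 1 => exact hwc j

lemma fmat_mulVec {m n k : ℕ} (E A : Matrix (Fin m) (Fin n) ℝ) (w : ℕ → Fin n → ℝ)
    (hw : ∀ i, k ≤ i → w i = 0) (i : Fin k) (a : Fin m) :
    (Fmat k E A).mulVec (fun q => w q.1.val q.2) (i, a)
      = E.mulVec (w i.val) a + A.mulVec (w (i.val + 1)) a := by
  simp only [Matrix.mulVec, dotProduct, Fmat, Matrix.of_apply]
  rw [Fintype.sum_prod_type]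
  have key : ∀ j : Fin k,
      (∑ c : Fin n, (if (j : ℕ) = (i : ℕ) then E a c
          else if (j : ℕ) = (i : ℕ) + 1 then A a c else 0) * w j.val c)
        = (if (j : ℕ) = (i : ℕ) then E.mulVec (w i.val) a else 0)
          + (if (j : ℕ) = (i : ℕ) + 1 then A.mulVec (w ((i : ℕ) + 1)) a else 0) := by
    intro j
    by_cases h1 : (j : ℕ) = (i : ℕ)
    · simp [h1, Matrix.mulVec, dotProduct, Nat.succ_ne_self, (Nat.lt_succ_self (i:ℕ)).ne]
    · by_cases h2 : (j : ℕ) = (i : ℕ) + 1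
      · simp [h1, h2, Matrix.mulVec, dotProduct]
      · simp [h1, h2]
  rw [Finset.sum_congr rfl (fun j _ => key j), Finset.sum_add_distrib]
  congr 1
  · have hji : ∀ j : Fin k, ((j : ℕ) = (i : ℕ)) ↔ j = i := fun j => Fin.val_inj
    simp only [hji]
    rw [Finset.sum_ite_eq' Finset.univ]
    simp [Matrix.mulVec, dotProduct]
  · by_cases h : (i : ℕ) + 1 < k
    · have : ∀ j : Fin k, ((j : ℕ) = (i : ℕ) + 1) ↔ j = ⟨(i : ℕ) + 1, h⟩ := by
        intro j; constructor <;> intro hh <;> simp_all [Fin.ext_iff]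
      simp only [this]
      rw [Finset.sum_ite_eq' Finset.univ]
      simp [Matrix.mulVec, dotProduct]
    · have hz : w ((i : ℕ) + 1) = 0 := hw _ (Nat.le_of_not_lt h)
      have : ∀ j : Fin k, ¬ ((j : ℕ) = (i : ℕ) + 1) := by
        intro j hj; exact h (hj ▸ j.isLt)
      simp [this, hz]

/-- If `W^n_{[E,A,0,0]} = ℝ^n`, then `ker F_{n,[E,A]} ⊆ ker [K 0 … 0]` iff `K = 0`. -/
theorem stmt_4 {m n r : ℕ} (hn : 1 ≤ n)
    (E A : Matrix (Fin m) (Fin n) ℝ)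
    (hW : WongW E A (0 : Matrix (Fin m) (Fin 1) ℝ) (0 : Matrix (Fin 1) (Fin n) ℝ) n = ⊤)
    (K : Matrix (Fin r) (Fin n) ℝ) :
    LinearMap.ker (Fmat n E A).mulVecLin ≤
      LinearMap.ker (Matrix.of fun (i : Fin r) (q : Fin n × Fin n) =>
        if q.1.val = 0 then K i q.2 else 0 : Matrix (Fin r) (Fin n × Fin n) ℝ).mulVecLin ↔
    K = 0 := by
  constructor
  · intro h
    ext i j
    -- build chain for x = single j 1
    obtain ⟨w, hw0, hwz, hwc⟩ := chain E A n (Pi.single j 1) (hW ▸ Submodule.mem_top)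
    set v : Fin n × Fin n → ℝ := fun q => w q.1.val q.2 with hv
    have hvker : v ∈ LinearMap.ker (Fmat n E A).mulVecLin := by
      rw [LinearMap.mem_ker]
      funext p
      obtain ⟨ii, a⟩ := p
      rw [Matrix.mulVecLin_apply]
      rw [show (Fmat n E A).mulVec v (ii, a)
          = E.mulVec (w ii.val) a + A.mulVec (w (ii.val + 1)) a from
        fmat_mulVec E A w hwz ii a]
      have := congrFun (hwc ii.val) a
      simpa using this
    have h2 := h hvker
    rw [LinearMap.mem_ker] at h2
    have h3 := congrFun h2 i
    rw [Matrix.mulVecLin_apply] at h3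
    simp only [Matrix.mulVec, dotProduct, Matrix.of_apply, Pi.zero_apply] at h3
    rw [Fintype.sum_prod_type] at h3
    have key : ∀ jj : Fin n,
        (∑ c : Fin n, (if (jj : ℕ) = 0 then K i c else 0) * v (jj, c))
          = if jj = (⟨0, hn⟩ : Fin n) then K i j else 0 := by
      intro jj
      by_cases hj : jj = (⟨0, hn⟩ : Fin n)
      · subst hj
        simp only [hv, hw0]
        simp [Pi.single_apply, Finset.sum_ite_eq']
      · have : ¬ ((jj : ℕ) = 0) := by
          intro hc; exact hj (Fin.ext hc)
        simp [this, hj]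
    rw [Finset.sum_congr rfl (fun jj _ => key jj), Finset.sum_ite_eq' Finset.univ] at h3
    simpa using h3
  · intro h
    subst h
    intro x _
    rw [LinearMap.mem_ker]
    have : (Matrix.of fun (i : Fin r) (q : Fin n × Fin n) =>
        if q.1.val = 0 then (0 : Matrix (Fin r) (Fin n) ℝ) i q.2 else 0) =
        (0 : Matrix (Fin r) (Fin n × Fin n) ℝ) := by
      ext i q; simp
    rw [this]
    simp
end

section
/- With the notation of the context: 𝒜₁⁻¹(im F_{n,[ℰ,Â]}) = A⁻¹(E·V^{n−1}_{[E,A,B,0]}) as subspaces of ℝ^n. -/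
open Matrix

/-- The block matrix `𝒜`, an `n × n` array of `m × n` blocks with `A` in block
position `(n,1)` and zeros elsewhere. -/
noncomputable def calA {m n : ℕ} (A : Matrix (Fin m) (Fin n) ℝ) :
    Matrix (Fin n × Fin m) (Fin n × Fin n) ℝ :=
  Matrix.of fun p q => if p.1.val = n - 1 ∧ q.1.val = 0 then A p.2 q.2 else 0

/-- The block column `𝒜₁`, an `n × 1` array of `m × n` blocks with `A` in the bottom
block and zeros above. -/
noncomputable def calA1 {m n : ℕ} (A : Matrix (Fin m) (Fin n) ℝ) :
    Matrix (Fin n × Fin m) (Fin n) ℝ :=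
  Matrix.of fun p j => if p.1.val = n - 1 then A p.2 j else 0

/-- The block row `[K 0 … 0]` (`k` block columns) with `K` in the first block column. -/
noncomputable def firstBlockCol {r n : ℕ} (k : ℕ) (K : Matrix (Fin r) (Fin n) ℝ) :
    Matrix (Fin r) (Fin k × Fin n) ℝ :=
  Matrix.of fun i q => if q.1.val = 0 then K i q.2 else 0

/-!
Write a solution `z` of `F_{n,[ℰ,Â]} z = 𝒜₁ x` blockwise as `z_i = (v_i, u_i)`. Block row `i` of
the system reads `E v_i + A v_{i+1} + B u_{i+1} = 0` for `i < n - 1`, and the last one reads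
`E v_{n-1} = A x`. Since `A v_{i+1} ∈ E (-v_i) + im B` is exactly one step of the Wong recursion,
an induction shows that the vectors of `V^k_{[E,A,B,C]}` are exactly the ends `v_k` of such chains
`v_0, …, v_k` in `ker C`; with `C = 0` this says that `A x ∈ E·V^{n-1}`.
-/

-- Blocks are indexed by `ℕ` and vanish from `k` on, so that every block row of `F_{k,[E,A]} z`
-- has the same shape `E z_i + A z_{i+1}`.
def vecBlocks {k : ℕ} {C α : Type*} [Zero α] (z : Fin k × C → α) (i : ℕ) : C → α :=
  fun c => if h : i < k then z (⟨i, h⟩, c) else 0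

lemma vecBlocks_of_lt {k : ℕ} {C α : Type*} [Zero α] (z : Fin k × C → α) {i : ℕ} (h : i < k) :
    vecBlocks z i = fun c => z (⟨i, h⟩, c) :=
  funext fun _ => dif_pos h

lemma vecBlocks_of_le {k : ℕ} {C α : Type*} [Zero α] (z : Fin k × C → α) {i : ℕ} (h : k ≤ i) :
    vecBlocks z i = 0 :=
  funext fun _ => dif_neg (Nat.not_lt.mpr h)

lemma vecBlocks_eq_sum {k : ℕ} {C : Type*} (z : Fin k × C → ℝ) (i : ℕ) (c : C) :
    vecBlocks z i c = ∑ j : Fin k, if j.val = i then z (j, c) else 0 := by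
  unfold vecBlocks
  split_ifs with h
  · rw [Finset.sum_eq_single ⟨i, h⟩] <;> simp +contextual [Fin.ext_iff]
  · exact (Finset.sum_eq_zero fun j _ => if_neg (by omega)).symm

lemma Fmat_mulVec_block {k : ℕ} {R C : Type*} [Fintype R] [Fintype C] (E A : Matrix R C ℝ)
    (z : Fin k × C → ℝ) (i : Fin k) :
    (fun r => (Fmat k E A *ᵥ z) (i, r)) = E *ᵥ vecBlocks z i + A *ᵥ vecBlocks z (i + 1) := by
  ext r
  have hentry : ∀ j c, Fmat k E A (i, r) (j, c) =
      (if j.val = i.val then E r c else 0) + (if j.val = i.val + 1 then A r c else 0) := by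
    intro j c
    simp only [Fmat, of_apply]
    split_ifs <;> first | omega | simp
  simp only [Pi.add_apply, mulVec, dotProduct, vecBlocks_eq_sum, Finset.mul_sum,
    Fintype.sum_prod_type, hentry, add_mul, ite_mul, zero_mul, Finset.sum_add_distrib]
  rw [Finset.sum_comm (γ := C), Finset.sum_comm (γ := C) (f := fun c j => A r c * _)]
  simp only [mul_ite, mul_zero]

lemma mem_range_Fmat_iff {k : ℕ} {R C : Type*} [Fintype R] [Fintype C] (E A : Matrix R C ℝ)
    (y : Fin k × R → ℝ) :
    y ∈ LinearMap.range (Fmat k E A).mulVecLin ↔ ∃ w : ℕ → C → ℝ, ∀ i : Fin k,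
      E *ᵥ w i + (if i.val + 1 < k then A *ᵥ w (i + 1) else 0) = fun r => y (i, r) := by
  constructor
  · rintro ⟨z, rfl⟩
    refine ⟨vecBlocks z, fun i => ?_⟩
    rw [mulVecLin_apply, Fmat_mulVec_block]
    split_ifs with h
    · rfl
    · rw [vecBlocks_of_le z (Nat.not_lt.mp h), mulVec_zero]
  · rintro ⟨w, hw⟩
    refine ⟨fun p => w p.1 p.2, funext fun ⟨i, r⟩ => congrFun (?_ :
      (fun r => (Fmat k E A *ᵥ fun p => w p.1 p.2) (i, r)) = fun r => y (i, r)) r⟩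
    rw [Fmat_mulVec_block, ← hw i, vecBlocks_of_lt _ i.isLt]
    split_ifs with h
    · rw [vecBlocks_of_lt _ h]
    · rw [vecBlocks_of_le _ (Nat.not_lt.mp h), mulVec_zero]

lemma mem_wongV_iff {R : Type*} [Fintype R] {n l p : ℕ} (E A : Matrix R (Fin n) ℝ)
    (B : Matrix R (Fin l) ℝ) (C : Matrix (Fin p) (Fin n) ℝ) (k : ℕ) (x : Fin n → ℝ) :
    x ∈ WongV E A B C k ↔ ∃ (v : ℕ → Fin n → ℝ) (u : ℕ → Fin l → ℝ), v k = x ∧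
      (∀ i ≤ k, C *ᵥ v i = 0) ∧ ∀ i < k, E *ᵥ v i + A *ᵥ v (i + 1) + B *ᵥ u (i + 1) = 0 := by
  induction k generalizing x with
  | zero =>
    refine ⟨fun hx => ⟨fun _ => x, 0, rfl, fun _ _ => hx, nofun⟩, ?_⟩
    rintro ⟨v, u, rfl, hC, -⟩
    exact hC 0 le_rfl
  | succ k ih =>
    constructor
    · rintro ⟨hx, hCx⟩
      obtain ⟨_, ⟨y, hy, rfl⟩, _, ⟨w, rfl⟩, hAx⟩ := Submodule.mem_sup.mp hx
      obtain ⟨v, u, hvk, hC, hchain⟩ := (ih (-y)).mp (neg_mem hy)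
      refine ⟨Function.update v (k + 1) x, Function.update u (k + 1) (-w), by simp,
        fun i hi => ?_, fun i hi => ?_⟩
      · rcases Nat.le_succ_iff.mp hi with hi | rfl
        · rw [Function.update_of_ne (by omega)]
          exact hC i hi
        · simpa using hCx
      · rcases Nat.lt_succ_iff_lt_or_eq.mp hi with hi | rfl
        · simp only [Function.update_of_ne (show i ≠ k + 1 by omega),
            Function.update_of_ne (show i + 1 ≠ k + 1 by omega)]
          exact hchain i hi
        · simp only [mulVecLin_apply] at hAx
          simp [hvk, mulVec_neg, ← hAx]
    · rintro ⟨v, u, rfl, hC, hchain⟩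
      have hvk : -v k ∈ WongV E A B C k :=
        (ih _).mpr ⟨-v, -u, rfl,
          fun i hi => by rw [Pi.neg_apply, mulVec_neg, hC i (by omega), neg_zero],
          fun i hi => by
            simp only [Pi.neg_apply, mulVec_neg, ← neg_add, hchain i (by omega), neg_zero]⟩
      refine ⟨Submodule.mem_sup.mpr ⟨_, ⟨_, hvk, rfl⟩, _, ⟨-u (k + 1), rfl⟩, ?_⟩, hC _ le_rfl⟩
      simp only [mulVecLin_apply, mulVec_neg]
      linear_combination (norm := module) -hchain k (by omega)

lemma mem_map_wongV_zero_iff {R : Type*} [Fintype R] {n l p : ℕ} (E A : Matrix R (Fin n) ℝ)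
    (B : Matrix R (Fin l) ℝ) (k : ℕ) (y : R → ℝ) :
    y ∈ (WongV E A B (0 : Matrix (Fin p) (Fin n) ℝ) k).map E.mulVecLin ↔
      ∃ (v : ℕ → Fin n → ℝ) (u : ℕ → Fin l → ℝ), E *ᵥ v k = y ∧
        ∀ i < k, E *ᵥ v i + A *ᵥ v (i + 1) + B *ᵥ u (i + 1) = 0 := by
  simp only [Submodule.mem_map, mem_wongV_iff, zero_mulVec, implies_true, true_and]
  constructor
  · rintro ⟨_, ⟨v, u, rfl, hchain⟩, rfl⟩
    exact ⟨v, u, rfl, hchain⟩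
  · rintro ⟨v, u, rfl, hchain⟩
    exact ⟨_, ⟨v, u, rfl, hchain⟩, rfl⟩

lemma calA1_mulVec_block {m n : ℕ} (A : Matrix (Fin m) (Fin n) ℝ) (x : Fin n → ℝ) (i : Fin n) :
    (fun r => (calA1 A *ᵥ x) (i, r)) = if i.val = n - 1 then A *ᵥ x else 0 := by
  ext r
  split_ifs with h <;> simp [calA1, mulVec, dotProduct, h]

/-- Identity (3.10): `𝒜₁⁻¹(im F_{n,[ℰ,Â]}) = A⁻¹(E·V^{n−1}_{[E,A,B,0]})`. -/
theorem stmt_8 {m n l : ℕ} (hn : 1 ≤ n)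
    (E A : Matrix (Fin m) (Fin n) ℝ) (B : Matrix (Fin m) (Fin l) ℝ) :
    Submodule.comap (calA1 A).mulVecLin
        (LinearMap.range (Fmat n (Matrix.fromCols E (0 : Matrix (Fin m) (Fin l) ℝ))
          (Matrix.fromCols A B)).mulVecLin) =
      Submodule.comap A.mulVecLin
        (Submodule.map E.mulVecLin
          (WongV E A B (0 : Matrix (Fin 1) (Fin n) ℝ) (n - 1))) := by
  ext x
  simp only [Submodule.mem_comap, mulVecLin_apply, mem_range_Fmat_iff, calA1_mulVec_block,
    fromCols_mulVec, zero_mulVec, add_zero, mem_map_wongV_zero_iff]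
  constructor
  · rintro ⟨w, hw⟩
    refine ⟨fun i => w i ∘ Sum.inl, fun i => w i ∘ Sum.inr, ?_, fun i hi => ?_⟩
    · simpa [show ¬n - 1 + 1 < n by omega] using hw ⟨n - 1, by omega⟩
    · simpa [show i + 1 < n by omega, show i ≠ n - 1 by omega, ← add_assoc] using hw ⟨i, by omega⟩
  · rintro ⟨v, u, hlast, hchain⟩
    refine ⟨fun i => Sum.elim (v i) (u i), fun i => ?_⟩
    by_cases hi : i.val = n - 1
    · simp [hi, hlast, show ¬n - 1 + 1 < n by omega]
    · simp [hi, show i.val + 1 < n by omega, ← add_assoc, hchain i (by omega)]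
end

section
/- Let E, A ∈ ℝ^{m×n} with n ≥ 1, C ∈ ℝ^{p×n}, K ∈ ℝ^{r×n}, and set Ē = [E; 0] ∈ ℝ^{(m+p)×n} and Ā = [A; C] ∈ ℝ^{(m+p)×n}. Then ker F_{n+1,[Ē,Ā]} ⊆ ker [0 K 0 … 0] (where [0 K 0 … 0] is the r×(n+1)n matrix with K in the second block column and zeros elsewhere) if and only if W*_{[E,A,0,C]} ∩ A⁻¹(im E) ⊆ ker K; equivalently, rank F_{n+1,[Ē,Ā]} = rank F_{n+1,[Ē,Ā,K]} if and only if W*_{[E,A,0,C]} ∩ A⁻¹(im E) ⊆ ker K. -/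
open Matrix

noncomputable def seg {k : ℕ} {C' : Type*} (x : Fin k × C' → ℝ) (j : ℕ) : C' → ℝ :=
  fun c => if h : j < k then x (⟨j, h⟩, c) else 0

lemma seg_of_ge {k : ℕ} {C' : Type*} (x : Fin k × C' → ℝ) {j : ℕ} (h : k ≤ j) :
    seg x j = 0 := by
  funext c; simp [seg, Nat.not_lt.mpr h]

lemma Fmat_mulVec {k : ℕ} {R C' : Type*} [Fintype R] [Fintype C'] (E A : Matrix R C' ℝ)
    (x : Fin k × C' → ℝ) (i : Fin k) (row : R) :
    (Fmat k E A).mulVec x (i, row)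
      = E.mulVec (seg x i.val) row + A.mulVec (seg x (i.val + 1)) row := by
  have hsplit : ∀ (j : Fin k) (c : C'),
      (if (j : ℕ) = (i : ℕ) then E row c else if (j : ℕ) = (i : ℕ) + 1 then A row c else 0)
          * x (j, c)
        = (if j = i then E row c * x (j, c) else 0)
          + (if (j : ℕ) = (i : ℕ) + 1 then A row c * x (j, c) else 0) := by
    intro j c
    rcases eq_or_ne j i with rfl | hji
    · simp
    · rw [if_neg hji, if_neg (fun h => hji (Fin.val_eq_val j i |>.mp h))]
      by_cases h2 : (j : ℕ) = (i : ℕ) + 1 <;> simp [h2]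
  calc (Fmat k E A).mulVec x (i, row)
      = ∑ j : Fin k, ∑ c : C',
          (if (j : ℕ) = (i : ℕ) then E row c else if (j : ℕ) = (i : ℕ) + 1 then A row c else 0)
            * x (j, c) := by
        simp [Matrix.mulVec, dotProduct, Fmat, Fintype.sum_prod_type]
    _ = (∑ j : Fin k, ∑ c : C', if j = i then E row c * x (j, c) else 0)
        + (∑ j : Fin k, ∑ c : C', if (j : ℕ) = (i : ℕ) + 1 then A row c * x (j, c) else 0) := by
        simp only [hsplit, Finset.sum_add_distrib]
    _ = E.mulVec (seg x i.val) row + A.mulVec (seg x (i.val + 1)) row := by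
        congr 1
        · rw [Finset.sum_comm]
          have : ∀ c : C', ∑ j : Fin k, (if j = i then E row c * x (j, c) else 0)
              = E row c * x (i, c) := by
            intro c; rw [Finset.sum_ite_eq' Finset.univ i (fun j => E row c * x (j, c))]
            simp
          simp only [this]
          simp [Matrix.mulVec, dotProduct, seg, i.isLt]
        · by_cases h : (i : ℕ) + 1 < k
          · have hcond : ∀ j : Fin k, ((j : ℕ) = (i : ℕ) + 1) ↔ j = ⟨(i : ℕ) + 1, h⟩ := by
              intro j; rw [Fin.ext_iff]
            simp only [hcond]
            have pull : ∀ j : Fin k, (∑ c : C', if j = ⟨(i : ℕ) + 1, h⟩ then A row c * x (j, c) else 0)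
                = if j = ⟨(i : ℕ) + 1, h⟩ then ∑ c : C', A row c * x (j, c) else 0 := by
              intro j; split_ifs <;> simp
            simp only [pull]
            rw [Finset.sum_ite_eq' Finset.univ (⟨(i : ℕ) + 1, h⟩ : Fin k)
              (fun j => ∑ c : C', A row c * x (j, c))]
            · simp [Matrix.mulVec, dotProduct, seg, h]
          · rw [seg_of_ge x (Nat.not_lt.mp h), Matrix.mulVec_zero]
            apply Finset.sum_eq_zero
            intro j _
            apply Finset.sum_eq_zero
            intro c _
            rw [if_neg]
            omega

lemma mulVec_Fmat_eq_zero_iff {k : ℕ} {R C' : Type*} [Fintype R] [Fintype C']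
    (E A : Matrix R C' ℝ) (x : Fin k × C' → ℝ) :
    (Fmat k E A).mulVec x = 0 ↔
      ∀ j : ℕ, E.mulVec (seg x j) + A.mulVec (seg x (j + 1)) = 0 := by
  constructor
  · intro h j
    by_cases hj : j < k
    · funext row
      have := congrFun h (⟨j, hj⟩, row)
      rw [Fmat_mulVec] at this
      simpa using this
    · rw [seg_of_ge x (Nat.not_lt.mp hj), seg_of_ge x (by omega)]
      simp
  · intro h
    funext q
    obtain ⟨i, row⟩ := q
    rw [Fmat_mulVec]
    have := congrFun (h i.val) row
    simpa using this

lemma rowblock_mulVec {k n r : ℕ} (K : Matrix (Fin r) (Fin n) ℝ) (x : Fin k × Fin n → ℝ) :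
    (Matrix.of fun (i : Fin r) (q : Fin k × Fin n) => if q.1.val = 1 then K i q.2 else 0).mulVec x
      = K.mulVec (seg x 1) := by
  funext i
  have expand : (Matrix.of fun (i : Fin r) (q : Fin k × Fin n) =>
        if q.1.val = 1 then K i q.2 else 0).mulVec x i
      = ∑ j : Fin k, ∑ c : Fin n, (if (j : ℕ) = 1 then K i c * x (j, c) else 0) := by
    simp only [Matrix.mulVec, dotProduct, Matrix.of_apply, Fintype.sum_prod_type]
    congr 1; funext j; congr 1; funext c
    split_ifs <;> simp
  rw [expand]
  by_cases h : 1 < k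
  · have hcond : ∀ j : Fin k, ((j : ℕ) = 1) ↔ j = ⟨1, h⟩ := by
      intro j; rw [Fin.ext_iff]
    simp only [hcond]
    have pull : ∀ j : Fin k, (∑ c : Fin n, if j = ⟨1, h⟩ then K i c * x (j, c) else 0)
        = if j = ⟨1, h⟩ then ∑ c : Fin n, K i c * x (j, c) else 0 := by
      intro j; split_ifs <;> simp
    simp only [pull]
    rw [Finset.sum_ite_eq' Finset.univ (⟨1, h⟩ : Fin k)]
    simp [Matrix.mulVec, dotProduct, seg, h]
  · rw [seg_of_ge x (Nat.not_lt.mp h), Matrix.mulVec_zero]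
    apply Finset.sum_eq_zero; intro j _
    apply Finset.sum_eq_zero; intro c _
    rw [if_neg]; omega

lemma mulVec_FmatK_eq_zero_iff {k r : ℕ} {R : Type*} [Fintype R] {n : ℕ}
    (E A : Matrix R (Fin n) ℝ) (K : Matrix (Fin r) (Fin n) ℝ) (x : Fin k × Fin n → ℝ) :
    (FmatK k E A K).mulVec x = 0 ↔
      (Fmat k E A).mulVec x = 0 ∧
      (Matrix.of fun (i : Fin r) (q : Fin k × Fin n) =>
        if q.1.val = 1 then K i q.2 else 0).mulVec x = 0 := by
  constructor
  · intro h
    constructor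
    · funext p
      have := congrFun h (Sum.inl p)
      simpa [FmatK, Matrix.mulVec, dotProduct] using this
    · funext i
      have := congrFun h (Sum.inr i)
      simpa [FmatK, Matrix.mulVec, dotProduct] using this
  · rintro ⟨h1, h2⟩
    funext q
    rcases q with p | i
    · have := congrFun h1 p
      simpa [FmatK, Matrix.mulVec, dotProduct] using this
    · have := congrFun h2 i
      simpa [FmatK, Matrix.mulVec, dotProduct] using this

lemma rank_eq_iff_ker_le {ι₁ ι₂ κ : Type*} [Fintype ι₁] [Fintype ι₂] [Fintype κ]
    (M : Matrix ι₁ κ ℝ) (G : Matrix (ι₁ ⊕ ι₂) κ ℝ) (N : Matrix ι₂ κ ℝ)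
    (hG : ∀ x, G.mulVec x = 0 ↔ M.mulVec x = 0 ∧ N.mulVec x = 0) :
    M.rank = G.rank ↔ LinearMap.ker M.mulVecLin ≤ LinearMap.ker N.mulVecLin := by
  have hkerG : LinearMap.ker G.mulVecLin
      = LinearMap.ker M.mulVecLin ⊓ LinearMap.ker N.mulVecLin := by
    ext x
    simp only [LinearMap.mem_ker, Matrix.mulVecLin_apply, Submodule.mem_inf]
    exact hG x
  have hle : LinearMap.ker G.mulVecLin ≤ LinearMap.ker M.mulVecLin := by
    rw [hkerG]; exact inf_le_left
  have hM := LinearMap.finrank_range_add_finrank_ker M.mulVecLin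
  have hGr := LinearMap.finrank_range_add_finrank_ker G.mulVecLin
  have hrankM : M.rank = Module.finrank ℝ (LinearMap.range M.mulVecLin) := rfl
  have hrankG : G.rank = Module.finrank ℝ (LinearMap.range G.mulVecLin) := rfl
  constructor
  · intro h
    have hfr : Module.finrank ℝ (LinearMap.ker M.mulVecLin)
        = Module.finrank ℝ (LinearMap.ker G.mulVecLin) := by
      rw [hrankM, hrankG] at h; omega
    have : LinearMap.ker G.mulVecLin = LinearMap.ker M.mulVecLin :=
      Submodule.eq_of_le_of_finrank_le hle (le_of_eq hfr)
    rw [hkerG] at this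
    intro x hx
    exact (le_of_eq this.symm hx).2
  · intro h
    have : LinearMap.ker G.mulVecLin = LinearMap.ker M.mulVecLin := by
      rw [hkerG, inf_eq_left.mpr h]
    rw [hrankM, hrankG]
    rw [this] at hGr
    omega

lemma chain_stab {M : Type*} [AddCommGroup M] [Module ℝ M] [FiniteDimensional ℝ M]
    (W : ℕ → Submodule ℝ M) (h0 : W 0 = ⊥)
    (hF : ∀ i j, W i ≤ W j → W (i + 1) ≤ W (j + 1)) (N : ℕ) (hN : Module.finrank ℝ M ≤ N) :
    ∀ i, W i ≤ W N := by
  have mono : ∀ i, W i ≤ W (i + 1) := by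
    intro i; induction i with
    | zero => rw [h0]; exact bot_le
    | succ i ih => exact hF _ _ ih
  have mono' : Monotone W := monotone_nat_of_le_succ mono
  have key : ∃ j, j ≤ N ∧ W j = W (j + 1) := by
    by_contra hcon
    push_neg at hcon
    have grow : ∀ j, j ≤ N + 1 → j ≤ Module.finrank ℝ (W j) := by
      intro j hj
      induction j with
      | zero => exact Nat.zero_le _
      | succ j ih =>
        have h1 : W j < W (j + 1) := lt_of_le_of_ne (mono j) (hcon j (by omega))
        have h2 := Submodule.finrank_lt_finrank_of_lt h1
        have h3 := ih (by omega)
        omega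
    have h4 := grow (N + 1) le_rfl
    have h5 := Submodule.finrank_le (W (N + 1))
    omega
  obtain ⟨j, hj, hWj⟩ := key
  have stable : ∀ t, W (j + t) = W j := by
    intro t; induction t with
    | zero => rfl
    | succ t ih =>
      refine le_antisymm ?_ (mono' (by omega))
      have : W (j + t + 1) ≤ W (j + 1) := hF _ _ (le_of_eq ih)
      rw [← hWj] at this
      exact this
  intro i
  rcases le_or_gt i N with h | h
  · exact mono' h
  · have e1 : W i = W j := by
      have := stable (i - j); rwa [Nat.add_sub_cancel' (by omega)] at this
    have e2 : W N = W j := by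
      have := stable (N - j); rwa [Nat.add_sub_cancel' hj] at this
    rw [e1, e2]

section Wong

variable {m n pp : ℕ} (E A : Matrix (Fin m) (Fin n) ℝ) (C : Matrix (Fin pp) (Fin n) ℝ)

lemma mem_WongW_succ_iff (i : ℕ) (v : Fin n → ℝ) :
    v ∈ WongW E A (0 : Matrix (Fin m) (Fin 1) ℝ) C (i + 1) ↔
      (∃ z ∈ WongW E A (0 : Matrix (Fin m) (Fin 1) ℝ) C i, A.mulVec z = E.mulVec v) ∧
        C.mulVec v = 0 := by
  rw [WongW]
  simp [Matrix.mulVecLin_zero, LinearMap.range_zero, Submodule.mem_comap,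
    LinearMap.mem_ker, Matrix.mulVecLin_apply, Submodule.mem_map]

lemma WongW_mono_step : ∀ i j, WongW E A (0 : Matrix (Fin m) (Fin 1) ℝ) C i ≤
    WongW E A (0 : Matrix (Fin m) (Fin 1) ℝ) C j →
    WongW E A (0 : Matrix (Fin m) (Fin 1) ℝ) C (i + 1) ≤
    WongW E A (0 : Matrix (Fin m) (Fin 1) ℝ) C (j + 1) := by
  intro i j h
  rw [WongW, WongW]
  exact inf_le_inf_right _ (Submodule.comap_mono (sup_le_sup_right (Submodule.map_mono h) _))

lemma WongW_le_n (i : ℕ) : WongW E A (0 : Matrix (Fin m) (Fin 1) ℝ) C i ≤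
    WongW E A (0 : Matrix (Fin m) (Fin 1) ℝ) C n := by
  refine chain_stab _ rfl (WongW_mono_step E A C) n ?_ i
  simp [Module.finrank_pi]

lemma good : ∀ t, ∀ v ∈ WongW E A (0 : Matrix (Fin m) (Fin 1) ℝ) C t,
    ∃ u : ℕ → (Fin n → ℝ), u 0 = v ∧ (∀ s, E.mulVec (u s) + A.mulVec (u (s + 1)) = 0)
      ∧ (∀ s, C.mulVec (u s) = 0) ∧ (∀ s, t ≤ s → u s = 0) := by
  intro t
  induction t with
  | zero =>
    intro v hv
    rw [WongW, Submodule.mem_bot] at hv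
    subst hv
    exact ⟨fun _ => 0, rfl, fun s => by simp, fun s => by simp, fun s _ => rfl⟩
  | succ t ih =>
    intro v hv
    rw [mem_WongW_succ_iff] at hv
    obtain ⟨⟨z, hz, hzv⟩, hCv⟩ := hv
    obtain ⟨u, hu0, hrel, hC, hvan⟩ := ih (-z) (neg_mem hz)
    refine ⟨fun s => Nat.casesOn s v u, rfl, ?_, ?_, ?_⟩
    · intro s
      cases s with
      | zero =>
        show E.mulVec v + A.mulVec (u 0) = 0
        rw [hu0, Matrix.mulVec_neg, ← hzv]
        abel
      | succ s => exact hrel s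
    · intro s
      cases s with
      | zero => exact hCv
      | succ s => exact hC s
    · intro s hs
      cases s with
      | zero => omega
      | succ s => exact hvan s (by omega)

end Wong

lemma elim_add_eq_zero {α β : Type*} (f g : α → ℝ) (f' g' : β → ℝ) :
    Sum.elim f f' + Sum.elim g g' = 0 ↔ f + g = 0 ∧ f' + g' = 0 := by
  simp only [funext_iff, Sum.forall, Pi.add_apply, Pi.zero_apply, Sum.elim_inl, Sum.elim_inr]

lemma mem_ker_big_iff {m n p : ℕ} (E A : Matrix (Fin m) (Fin n) ℝ)
    (C : Matrix (Fin p) (Fin n) ℝ) (x : Fin (n + 1) × Fin n → ℝ) :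
    (Fmat (n + 1) (Matrix.fromRows E (0 : Matrix (Fin p) (Fin n) ℝ))
        (Matrix.fromRows A C)).mulVec x = 0 ↔
      ∀ j : ℕ, (E.mulVec (seg x j) + A.mulVec (seg x (j + 1)) = 0 ∧
        C.mulVec (seg x (j + 1)) = 0) := by
  rw [mulVec_Fmat_eq_zero_iff]
  apply forall_congr'
  intro j
  rw [Matrix.fromRows_mulVec, Matrix.fromRows_mulVec, elim_add_eq_zero]
  rw [Matrix.zero_mulVec, zero_add]

/-- With `Ē = [E; 0]`, `Ā = [A; C]`: `ker F_{n+1,[Ē,Ā]} ⊆ ker [0 K 0 … 0]` iff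
`W*_{[E,A,0,C]} ∩ A⁻¹(im E) ⊆ ker K`; equivalently,
`rank F_{n+1,[Ē,Ā]} = rank F_{n+1,[Ē,Ā,K]}` iff the same inclusion holds. -/
theorem stmt_10 {m n p r : ℕ}
    (E A : Matrix (Fin m) (Fin n) ℝ) (C : Matrix (Fin p) (Fin n) ℝ)
    (K : Matrix (Fin r) (Fin n) ℝ) :
    (LinearMap.ker (Fmat (n + 1) (Matrix.fromRows E (0 : Matrix (Fin p) (Fin n) ℝ))
          (Matrix.fromRows A C)).mulVecLin ≤
        LinearMap.ker (Matrix.of fun (i : Fin r) (q : Fin (n + 1) × Fin n) =>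
          if q.1.val = 1 then K i q.2 else 0 :
            Matrix (Fin r) (Fin (n + 1) × Fin n) ℝ).mulVecLin ↔
      (⨆ i, WongW E A (0 : Matrix (Fin m) (Fin 1) ℝ) C i) ⊓
        Submodule.comap A.mulVecLin (LinearMap.range E.mulVecLin) ≤
      LinearMap.ker K.mulVecLin) ∧
    ((Fmat (n + 1) (Matrix.fromRows E (0 : Matrix (Fin p) (Fin n) ℝ))
          (Matrix.fromRows A C)).rank =
        (FmatK (n + 1) (Matrix.fromRows E (0 : Matrix (Fin p) (Fin n) ℝ))
          (Matrix.fromRows A C) K).rank ↔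
      (⨆ i, WongW E A (0 : Matrix (Fin m) (Fin 1) ℝ) C i) ⊓
        Submodule.comap A.mulVecLin (LinearMap.range E.mulVecLin) ≤
      LinearMap.ker K.mulVecLin) := by
  have part1 : (LinearMap.ker (Fmat (n + 1) (Matrix.fromRows E (0 : Matrix (Fin p) (Fin n) ℝ))
          (Matrix.fromRows A C)).mulVecLin ≤
        LinearMap.ker (Matrix.of fun (i : Fin r) (q : Fin (n + 1) × Fin n) =>
          if q.1.val = 1 then K i q.2 else 0 :
            Matrix (Fin r) (Fin (n + 1) × Fin n) ℝ).mulVecLin ↔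
      (⨆ i, WongW E A (0 : Matrix (Fin m) (Fin 1) ℝ) C i) ⊓
        Submodule.comap A.mulVecLin (LinearMap.range E.mulVecLin) ≤
      LinearMap.ker K.mulVecLin) := by
    constructor
    · -- kernel inclusion → Wong inclusion
      intro hker v hv
      rw [Submodule.mem_inf] at hv
      obtain ⟨hv1, hv2⟩ := hv
      have hvn : v ∈ WongW E A (0 : Matrix (Fin m) (Fin 1) ℝ) C n :=
        iSup_le (WongW_le_n E A C) hv1
      rw [Submodule.mem_comap, LinearMap.mem_range] at hv2
      obtain ⟨y, hy⟩ := hv2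
      rw [Matrix.mulVecLin_apply, Matrix.mulVecLin_apply] at hy
      obtain ⟨u, hu0, hrel, hC, hvan⟩ := good E A C n v hvn
      set x : Fin (n + 1) × Fin n → ℝ :=
        fun q => if q.1.val = 0 then (-y) q.2 else u (q.1.val - 1) q.2 with hx
      have hseg0 : seg x 0 = -y := by
        funext c
        simp [seg, hx]
      have hseg : ∀ j, 1 ≤ j → seg x j = u (j - 1) := by
        intro j hj
        by_cases h : j < n + 1
        · funext c
          simp only [seg, h, dif_pos, hx]
          rw [if_neg (by omega)]
        · rw [seg_of_ge x (by omega), hvan (j - 1) (by omega)]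
      have hxk : x ∈ LinearMap.ker (Fmat (n + 1)
          (Matrix.fromRows E (0 : Matrix (Fin p) (Fin n) ℝ))
          (Matrix.fromRows A C)).mulVecLin := by
        rw [LinearMap.mem_ker, Matrix.mulVecLin_apply, mem_ker_big_iff]
        intro j
        cases j with
        | zero =>
          rw [hseg0, hseg 1 le_rfl]
          simp only [Nat.sub_self, hu0]
          constructor
          · rw [Matrix.mulVec_neg, hy]
            abel
          · have := hC 0
            rwa [hu0] at this
        | succ s =>
          rw [hseg (s + 1) (by omega), hseg (s + 2) (by omega)]
          simp only [Nat.add_sub_cancel]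
          exact ⟨hrel s, hC (s + 1)⟩
      have := hker hxk
      rw [LinearMap.mem_ker, Matrix.mulVecLin_apply, rowblock_mulVec] at this
      rw [hseg 1 le_rfl, Nat.sub_self, hu0] at this
      rw [LinearMap.mem_ker, Matrix.mulVecLin_apply]
      exact this
    · -- Wong inclusion → kernel inclusion
      intro hW x hx
      rw [LinearMap.mem_ker, Matrix.mulVecLin_apply, mem_ker_big_iff] at hx
      have claim : ∀ t, t ≤ n → seg x (n + 1 - t) ∈
          WongW E A (0 : Matrix (Fin m) (Fin 1) ℝ) C t := by
        intro t
        induction t with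
        | zero =>
          intro _
          rw [Nat.sub_zero, seg_of_ge x le_rfl, WongW]
          exact zero_mem _
        | succ t ih =>
          intro ht
          rw [mem_WongW_succ_iff]
          have e1 : n + 1 - (t + 1) = n - t := by omega
          have e2 : n - t + 1 = n + 1 - t := by omega
          rw [e1]
          refine ⟨⟨-(seg x (n + 1 - t)), neg_mem (ih (by omega)), ?_⟩, ?_⟩
          · rw [Matrix.mulVec_neg]
            have := (hx (n - t)).1
            rw [e2] at this
            linear_combination (norm := module) -this
          · have := (hx (n - t - 1)).2
            rwa [(by omega : n - t - 1 + 1 = n - t)] at this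
      have hv1 : seg x 1 ∈ (⨆ i, WongW E A (0 : Matrix (Fin m) (Fin 1) ℝ) C i) := by
        have := claim n le_rfl
        rw [(by omega : n + 1 - n = 1)] at this
        exact le_iSup (WongW E A (0 : Matrix (Fin m) (Fin 1) ℝ) C) n this
      have hv2 : seg x 1 ∈ Submodule.comap A.mulVecLin (LinearMap.range E.mulVecLin) := by
        rw [Submodule.mem_comap, Matrix.mulVecLin_apply]
        have h0 := (hx 0).1
        have : A.mulVec (seg x 1) = E.mulVec (-(seg x 0)) := by
          rw [Matrix.mulVec_neg]
          linear_combination (norm := module) h0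
        rw [this]
        exact ⟨-(seg x 0), by rw [Matrix.mulVecLin_apply]⟩
      have := hW ⟨hv1, hv2⟩
      rw [LinearMap.mem_ker, Matrix.mulVecLin_apply] at this
      rw [LinearMap.mem_ker, Matrix.mulVecLin_apply, rowblock_mulVec]
      exact this
  refine ⟨part1, ?_⟩
  rw [← part1]
  exact rank_eq_iff_ker_le _ _ _ (mulVec_FmatK_eq_zero_iff _ _ K)
end

section
/- Let J ∈ ℝ^{k×k} be nilpotent, B ∈ ℝ^{k×l}, and K ∈ ℝ^{r×k}. If the matrix [J B] ∈ ℝ^{k×(k+l)} has full row rank (rank [J B] = k) and K J^i B = 0 for all integers i ≥ 1, then K J = 0. -/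
open Matrix

/-
Since `[J B]` has full row rank, a matrix `M` with `M J = 0` and `M B = 0` vanishes, because
`M [J B] = [M J  M B]`. As `J` is nilpotent, `K Jⁱ = 0` for large `i`; applying the cancellation
to `M = K Jⁱ` (for which `M J = K Jⁱ⁺¹` and `M B = K Jⁱ B = 0`) lowers `i` one step at a time
down to `i = 1`.
-/

namespace Matrix

variable {l m n R : Type*} [Field R]

theorem eq_zero_of_rank_eq_zero [Fintype n] {M : Matrix m n R} (h : M.rank = 0) : M = 0 := by
  classical
  rw [rank, Submodule.finrank_eq_zero, LinearMap.range_eq_bot, ← toLin'_apply'] at h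
  exact toLin'.map_eq_zero_iff.mp h

theorem eq_zero_of_mul_eq_zero_of_rank_eq_card [Finite l] [Fintype m] [Fintype n]
    {A : Matrix l m R} {B : Matrix m n R} (hB : B.rank = Fintype.card m) (hAB : A * B = 0) :
    A = 0 := by
  have := rank_add_rank_le_card_of_mul_eq_zero hAB
  have := Fintype.ofFinite l
  exact eq_zero_of_rank_eq_zero (by omega)

theorem eq_zero_of_mul_eq_zero_of_rank_fromCols_eq_card {n₁ n₂ : Type*} [Finite l] [Fintype m]
    [Fintype n₁] [Fintype n₂] {A : Matrix l m R} {B₁ : Matrix m n₁ R} {B₂ : Matrix m n₂ R}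
    (hB : (fromCols B₁ B₂).rank = Fintype.card m) (h₁ : A * B₁ = 0) (h₂ : A * B₂ = 0) :
    A = 0 :=
  eq_zero_of_mul_eq_zero_of_rank_eq_card hB (by rw [mul_fromCols, h₁, h₂, fromCols_zero])

end Matrix

/-- If `J` is nilpotent, `[J B]` has full row rank, and `K Jⁱ B = 0` for all `i ≥ 1`,
then `K J = 0`. -/
theorem stmt_13 {k l r : ℕ}
    (J : Matrix (Fin k) (Fin k) ℝ) (B : Matrix (Fin k) (Fin l) ℝ)
    (K : Matrix (Fin r) (Fin k) ℝ)
    (hJ : IsNilpotent J)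
    (hrank : (Matrix.fromCols J B).rank = k)
    (hKJB : ∀ i : ℕ, 1 ≤ i → K * J ^ i * B = 0) :
    K * J = 0 := by
  obtain ⟨n, hn⟩ := hJ
  have hrank' : (fromCols J B).rank = Fintype.card (Fin k) := by rw [hrank, Fintype.card_fin]
  suffices h : ∀ i ≤ n, K * J ^ (i + 1) = 0 by simpa using h 0 n.zero_le
  intro i hi
  induction hi using Nat.decreasingInduction with
  | self => rw [pow_succ, hn, zero_mul, Matrix.mul_zero]
  | of_succ i _ ih =>
    exact eq_zero_of_mul_eq_zero_of_rank_fromCols_eq_card hrank'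
      (by rwa [Matrix.mul_assoc, ← pow_succ]) (hKJB (i + 1) i.succ_pos)
end

section
/- Let E, A ∈ ℝ^{m×n} and C ∈ ℝ^{p×n}, and set Ē = [E; 0] ∈ ℝ^{(m+p)×n} (E stacked on a p×n zero block) and Ā = [A; C] ∈ ℝ^{(m+p)×n}. Then W*_{[Ē,Ā,0,0]} ∩ ker C = W*_{[E,A,0,C]}, and moreover Ā⁻¹(im Ē) = A⁻¹(im E) ∩ ker C. -/
open Matrix

lemma sum_elim_eq_iff {α β γ : Type*} {f f' : α → γ} {g g' : β → γ} :
    Sum.elim f g = Sum.elim f' g' ↔ f = f' ∧ g = g' := by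
  constructor
  · intro h
    constructor <;> funext a
    · exact congrFun h (Sum.inl a)
    · exact congrFun h (Sum.inr a)
  · rintro ⟨rfl, rfl⟩; rfl

lemma wongW_mono {R : Type*} [Fintype R] {n l p : ℕ}
    (E A : Matrix R (Fin n) ℝ) (B : Matrix R (Fin l) ℝ) (C : Matrix (Fin p) (Fin n) ℝ) :
    Monotone (WongW E A B C) := by
  apply monotone_nat_of_le_succ
  intro i
  induction i with
  | zero => simp [WongW]
  | succ i ih =>
    show WongW E A B C (i+1) ≤ WongW E A B C (i+2)
    simp only [WongW]
    exact inf_le_inf (Submodule.comap_mono (sup_le_sup (Submodule.map_mono ih) le_rfl)) le_rfl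

lemma wong_key {m n p : ℕ}
    (E A : Matrix (Fin m) (Fin n) ℝ) (C : Matrix (Fin p) (Fin n) ℝ) (i : ℕ) :
    WongW (fromRows E 0) (fromRows A C) (0 : Matrix (Fin m ⊕ Fin p) (Fin 1) ℝ)
        (0 : Matrix (Fin 1) (Fin n) ℝ) i ⊓ LinearMap.ker C.mulVecLin
      = WongW E A (0 : Matrix (Fin m) (Fin 1) ℝ) C i := by
  induction i with
  | zero => simp [WongW]
  | succ i ih =>
    ext x
    simp only [WongW, Submodule.mem_inf, Submodule.mem_comap, Submodule.mem_sup,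
      LinearMap.mem_ker, LinearMap.mem_range, Matrix.mulVecLin_zero, LinearMap.range_zero,
      LinearMap.ker_zero, sup_bot_eq, Submodule.mem_top, and_true, Submodule.mem_map,
      mulVecLin_apply, fromRows_mulVec, zero_mulVec, sum_elim_eq_iff]
    constructor
    · rintro ⟨⟨y, hy, hA, hC⟩, hx⟩
      refine ⟨⟨y, ?_, hA⟩, hx⟩
      rw [← ih]
      exact ⟨hy, hC⟩
    · rintro ⟨⟨y, hy, hA⟩, hx⟩
      rw [← ih] at hy
      exact ⟨⟨y, hy.1, hA, hy.2⟩, hx⟩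

/-- With `Ē = [E; 0]` and `Ā = [A; C]`: `W*_{[Ē,Ā,0,0]} ∩ ker C = W*_{[E,A,0,C]}`, and
`Ā⁻¹(im Ē) = A⁻¹(im E) ∩ ker C`. -/
theorem stmt_14 {m n p : ℕ}
    (E A : Matrix (Fin m) (Fin n) ℝ) (C : Matrix (Fin p) (Fin n) ℝ) :
    ((⨆ i, WongW (Matrix.fromRows E (0 : Matrix (Fin p) (Fin n) ℝ))
          (Matrix.fromRows A C)
          (0 : Matrix (Fin m ⊕ Fin p) (Fin 1) ℝ)
          (0 : Matrix (Fin 1) (Fin n) ℝ) i) ⊓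
        LinearMap.ker C.mulVecLin =
      (⨆ i, WongW E A (0 : Matrix (Fin m) (Fin 1) ℝ) C i)) ∧
    (Submodule.comap (Matrix.fromRows A C).mulVecLin
        (LinearMap.range (Matrix.fromRows E (0 : Matrix (Fin p) (Fin n) ℝ)).mulVecLin) =
      Submodule.comap A.mulVecLin (LinearMap.range E.mulVecLin) ⊓
        LinearMap.ker C.mulVecLin) := by
  constructor
  · apply le_antisymm
    · rintro x ⟨hx, hC⟩
      obtain ⟨i, hi⟩ := (Submodule.mem_iSup_of_directed _
        (wongW_mono _ _ _ _).directed_le).mp hx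
      exact Submodule.mem_iSup_of_mem i ((wong_key E A C i) ▸ ⟨hi, hC⟩)
    · apply iSup_le
      intro i
      rw [← wong_key E A C i]
      exact inf_le_inf (le_iSup _ i) le_rfl
  · ext x
    simp only [Submodule.mem_comap, LinearMap.mem_range, Submodule.mem_inf,
      LinearMap.mem_ker, mulVecLin_apply, fromRows_mulVec, zero_mulVec, sum_elim_eq_iff]
    constructor
    · rintro ⟨y, hE, hC⟩
      exact ⟨⟨y, hE⟩, hC.symm⟩
    · rintro ⟨⟨y, hE⟩, hC⟩
      exact ⟨y, hE, hC.symm⟩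
end

section
/- Let E11, A11 ∈ ℝ^{m1×n1}, E12, A12 ∈ ℝ^{m1×m2}, A22 ∈ ℝ^{m2×m2}, C11 ∈ ℝ^{p×n1}, C12 ∈ ℝ^{p×m2}, K11 ∈ ℝ^{r×n1}, K12 ∈ ℝ^{r×m2}. Set E = [E11 E12; 0 I_{m2}], A = [A11 A12; 0 A22] (both of size (m1+m2)×(n1+m2)), C = [C11 C12], K = [K11 K12], Ē = [E; 0], Ā = [A; C] (of size (m1+m2+p)×(n1+m2)), Ē11 = [E11; 0], Ā11 = [A11; C11] (of size (m1+p)×n1). Then for every k ≥ 1, rank F_{k,[Ē,Ā]} = k·m2 + rank F_{k,[Ē11,Ā11]}, and for every k ≥ 2, rank F_{k,[Ē,Ā,K]} = k·m2 + rank F_{k,[Ē11,Ā11,K11]}. -/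
open Matrix

/-!
Put the `k·m2` rows of `F_{k,[Ē,Ā,K]}` that come from the `[0 I]` rows of `E` first, and the
`k·m2` columns belonging to the second column block of each block column first. In this order
the matrix is `[U 0; Y F_{k,[Ē11,Ā11,K11]}]` with `U = F_{k,[I,A22]}`, which is block
unitriangular and hence invertible; eliminating `Y` against `U` splits off `rank U = k·m2`.
-/

section BlockRank

variable {K : Type*} [Field K]

lemma Submodule.finrank_prod {M N : Type*} [AddCommGroup M] [AddCommGroup N] [Module K M]
    [Module K N] [FiniteDimensional K M] [FiniteDimensional K N]
    (p : Submodule K M) (q : Submodule K N) :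
    Module.finrank K (p.prod q) = Module.finrank K p + Module.finrank K q := by
  have hinj : Function.Injective (p.subtype.prodMap q.subtype) :=
    Function.Injective.prodMap p.injective_subtype q.injective_subtype
  rw [← Module.finrank_prod, ← LinearMap.finrank_range_of_inj hinj, LinearMap.range_prodMap,
    Submodule.range_subtype, Submodule.range_subtype]

variable {m n o p : Type*} [Fintype m] [Fintype n] [Fintype o] [Fintype p]

lemma Matrix.rank_fromBlocks_zero_zero (A : Matrix m n K) (D : Matrix o p K) :
    (fromBlocks A 0 0 D).rank = A.rank + D.rank := by
  have hmul : (fromBlocks A 0 0 D).mulVecLin =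
      (LinearEquiv.sumArrowLequivProdArrow m o K K).symm.toLinearMap ∘ₗ
        (A.mulVecLin.prodMap D.mulVecLin) ∘ₗ
        (LinearEquiv.sumArrowLequivProdArrow n p K K).toLinearMap := by
    ext v (i | i) <;>
      simp only [LinearMap.coe_comp, LinearEquiv.coe_coe, Function.comp_apply,
        LinearMap.prodMap_apply, LinearEquiv.sumArrowLequivProdArrow_symm_apply_inl,
        LinearEquiv.sumArrowLequivProdArrow_symm_apply_inr, mulVecLin_apply, fromBlocks_mulVec,
        zero_mulVec, add_zero, zero_add, Sum.elim_inl, Sum.elim_inr] <;>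
      rfl
  rw [Matrix.rank, hmul, LinearMap.range_comp, LinearMap.range_comp, LinearEquiv.range,
    Submodule.map_top, LinearEquiv.finrank_map_eq, LinearMap.range_prodMap,
    Submodule.finrank_prod]
  rfl

lemma Matrix.rank_fromBlocks_zero₁₂_of_isUnit_det [DecidableEq m] (A : Matrix m m K)
    (C : Matrix o m K) (D : Matrix o p K) (hA : IsUnit A.det) :
    (fromBlocks A 0 C D).rank = Fintype.card m + D.rank := by
  classical
  have hfactor : fromBlocks A 0 C D =
      (fromBlocks 1 0 (C * A⁻¹) 1 : Matrix (m ⊕ o) (m ⊕ o) K) * fromBlocks A 0 0 D := by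
    rw [fromBlocks_multiply]
    simp [Matrix.mul_assoc, nonsing_inv_mul _ hA]
  rw [hfactor, rank_mul_eq_right_of_isUnit_det _ _ (by simp), rank_fromBlocks_zero_zero,
    rank_of_isUnit _ ((isUnit_iff_isUnit_det A).2 hA)]

end BlockRank

lemma det_Fmat {k : ℕ} {R : Type*} [Fintype R] [DecidableEq R] (E A : Matrix R R ℝ) :
    (Fmat k E A).det = E.det ^ k := by
  have htri : (Fmat k E A).BlockTriangular Prod.fst := by
    rintro ⟨i, x⟩ ⟨j, y⟩ (hji : j < i)
    simp only [Fmat, of_apply]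
    rw [if_neg (by omega), if_neg (by omega)]
  have hblock (i : Fin k) : ((Fmat k E A).toSquareBlock Prod.fst i).det = E.det := by
    let e : {x : Fin k × R // x.1 = i} ≃ R :=
      { toFun := fun x => x.1.2
        invFun := fun y => ⟨(i, y), rfl⟩
        left_inv := by rintro ⟨⟨_, _⟩, rfl⟩; rfl
        right_inv := fun _ => rfl }
    have : (Fmat k E A).toSquareBlock Prod.fst i = E.submatrix e e := by
      ext ⟨⟨j, x⟩, rfl⟩ ⟨⟨j', y⟩, hj'⟩
      obtain rfl : j' = j := hj'
      simp [toSquareBlock_def, Fmat, e]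
    rw [this, det_submatrix_equiv_self]
  rw [htri.det_fintype, Finset.prod_congr rfl fun i _ => hblock i, Finset.prod_const,
    Finset.card_univ, Fintype.card_fin]

lemma rank_FmatK_of_fin_zero (k : ℕ) {R C : Type*} [Fintype R] [Fintype C] (E A : Matrix R C ℝ)
    (K : Matrix (Fin 0) C ℝ) : (FmatK k E A K).rank = (Fmat k E A).rank := by
  have : FmatK k E A K = (Fmat k E A).submatrix (Equiv.sumEmpty _ _) (Equiv.refl _) := by
    ext (x | i) q
    · rfl
    · exact i.elim0
  rw [this, rank_submatrix]

def kalmanColEquiv (k : ℕ) (β γ : Type*) : (Fin k × γ) ⊕ (Fin k × β) ≃ Fin k × (β ⊕ γ) where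
  toFun
    | Sum.inl (i, s) => (i, Sum.inr s)
    | Sum.inr (i, c) => (i, Sum.inl c)
  invFun
    | (i, Sum.inl c) => Sum.inr (i, c)
    | (i, Sum.inr s) => Sum.inl (i, s)
  left_inv := by rintro (⟨i, s⟩ | ⟨i, c⟩) <;> rfl
  right_inv := by rintro ⟨i, c | s⟩ <;> rfl

def kalmanRowEquiv (k r : ℕ) (α γ π : Type*) :
    (Fin k × γ) ⊕ ((Fin k × (α ⊕ π)) ⊕ Fin r) ≃ (Fin k × ((α ⊕ γ) ⊕ π)) ⊕ Fin r where
  toFun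
    | Sum.inl (i, s) => Sum.inl (i, Sum.inl (Sum.inr s))
    | Sum.inr (Sum.inl (i, Sum.inl a)) => Sum.inl (i, Sum.inl (Sum.inl a))
    | Sum.inr (Sum.inl (i, Sum.inr b)) => Sum.inl (i, Sum.inr b)
    | Sum.inr (Sum.inr l) => Sum.inr l
  invFun
    | Sum.inl (i, Sum.inl (Sum.inl a)) => Sum.inr (Sum.inl (i, Sum.inl a))
    | Sum.inl (i, Sum.inl (Sum.inr s)) => Sum.inl (i, s)
    | Sum.inl (i, Sum.inr b) => Sum.inr (Sum.inl (i, Sum.inr b))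
    | Sum.inr l => Sum.inr (Sum.inr l)
  left_inv := by rintro (⟨i, s⟩ | ⟨i, a | b⟩ | l) <;> rfl
  right_inv := by rintro (⟨i, (a | s) | b⟩ | l) <;> rfl

section Kalman

variable {α β γ π : Type*} [Fintype α] [Fintype β] [Fintype γ] [Fintype π] [DecidableEq γ]
  {r : ℕ} (E11 A11 : Matrix α β ℝ) (E12 A12 : Matrix α γ ℝ) (A22 : Matrix γ γ ℝ)
  (C11 : Matrix π β ℝ) (C12 : Matrix π γ ℝ) (K11 : Matrix (Fin r) β ℝ) (K12 : Matrix (Fin r) γ ℝ)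

lemma submatrix_kalmanEquiv_FmatK (k : ℕ) :
    (FmatK k (fromRows (fromBlocks E11 E12 0 1) 0) (fromRows (fromBlocks A11 A12 0 A22)
        (fromCols C11 C12)) (fromCols K11 K12)).submatrix
        (kalmanRowEquiv k r α γ π) (kalmanColEquiv k β γ) =
      fromBlocks (Fmat k 1 A22) 0
        (FmatK k (fromRows E12 0) (fromRows A12 C12) K12)
        (FmatK k (fromRows E11 0) (fromRows A11 C11) K11) := by
  ext (⟨i, s⟩ | ⟨i, a | b⟩ | l) (⟨j, t⟩ | ⟨j, c⟩) <;>
    simp [FmatK, Fmat, kalmanRowEquiv, kalmanColEquiv]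

theorem rank_FmatK_kalman (k : ℕ) :
    (FmatK k (fromRows (fromBlocks E11 E12 0 1) 0) (fromRows (fromBlocks A11 A12 0 A22)
        (fromCols C11 C12)) (fromCols K11 K12)).rank =
      k * Fintype.card γ + (FmatK k (fromRows E11 0) (fromRows A11 C11) K11).rank := by
  rw [← rank_submatrix _ (kalmanRowEquiv k r α γ π) (kalmanColEquiv k β γ),
    submatrix_kalmanEquiv_FmatK, rank_fromBlocks_zero₁₂_of_isUnit_det _ _ _ (by simp [det_Fmat]),
    Fintype.card_prod, Fintype.card_fin]

end Kalman

/-- Rank reduction for the Kalman decomposition: with `E = [E11 E12; 0 I]`,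
`A = [A11 A12; 0 A22]`, `C = [C11 C12]`, `K = [K11 K12]`, `Ē = [E; 0]`, `Ā = [A; C]`,
`Ē11 = [E11; 0]`, `Ā11 = [A11; C11]`, we have
`rank F_{k,[Ē,Ā]} = k·m2 + rank F_{k,[Ē11,Ā11]}` for `k ≥ 1` and
`rank F_{k,[Ē,Ā,K]} = k·m2 + rank F_{k,[Ē11,Ā11,K11]}` for `k ≥ 2`. -/
theorem stmt_16 {m1 n1 m2 p r : ℕ}
    (E11 A11 : Matrix (Fin m1) (Fin n1) ℝ)
    (E12 A12 : Matrix (Fin m1) (Fin m2) ℝ)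
    (A22 : Matrix (Fin m2) (Fin m2) ℝ)
    (C11 : Matrix (Fin p) (Fin n1) ℝ) (C12 : Matrix (Fin p) (Fin m2) ℝ)
    (K11 : Matrix (Fin r) (Fin n1) ℝ) (K12 : Matrix (Fin r) (Fin m2) ℝ) :
    (∀ k : ℕ, 1 ≤ k →
      (Fmat k
          (Matrix.fromRows (Matrix.fromBlocks E11 E12 0 (1 : Matrix (Fin m2) (Fin m2) ℝ))
            ((0 : Matrix (Fin p) (Fin n1 ⊕ Fin m2) ℝ)))
          (Matrix.fromRows (Matrix.fromBlocks A11 A12 0 A22)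
            (Matrix.fromCols C11 C12))).rank =
        k * m2 +
          (Fmat k (Matrix.fromRows E11 (0 : Matrix (Fin p) (Fin n1) ℝ))
            (Matrix.fromRows A11 C11)).rank) ∧
    (∀ k : ℕ, 2 ≤ k →
      (FmatK k
          (Matrix.fromRows (Matrix.fromBlocks E11 E12 0 (1 : Matrix (Fin m2) (Fin m2) ℝ))
            ((0 : Matrix (Fin p) (Fin n1 ⊕ Fin m2) ℝ)))
          (Matrix.fromRows (Matrix.fromBlocks A11 A12 0 A22)
            (Matrix.fromCols C11 C12))
          (Matrix.fromCols K11 K12)).rank =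
        k * m2 +
          (FmatK k (Matrix.fromRows E11 (0 : Matrix (Fin p) (Fin n1) ℝ))
            (Matrix.fromRows A11 C11) K11).rank) := by
  refine ⟨fun k _ => ?_, fun k _ => ?_⟩
  · simpa only [rank_FmatK_of_fin_zero, Fintype.card_fin] using
      rank_FmatK_kalman E11 A11 E12 A12 A22 C11 C12 (0 : Matrix (Fin 0) _ ℝ) 0 k
  · simpa only [Fintype.card_fin] using
      rank_FmatK_kalman E11 A11 E12 A12 A22 C11 C12 K11 K12 k
end
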